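/- arXiv:2405.10414 — 8 statements merged into one kernel-verified Lean document; each statement's English description precedes it below -/
import Mathlib

section
/- Let X ⊆ ℝ^p be a nonempty compact convex set and let f : X → ℝ be a lower semicontinuous convex function. Let D_X = max_{x,x'∈X} ‖x − x'‖ and θ* = min_{x∈X} f(x). For ε' ≥ ε > 0 define the ε-optimal sets X_ε = {x ∈ X : f(x) ≤ θ* + ε} and X_{ε'} = {x ∈ X : f(x) ≤ θ* + ε'}. Then Δ(X_{ε'}, X_ε) ≤ ((ε' − ε)/ε)·D_X. -/
open Filter Topology

noncomputable section

/-- The pessimistic distance `Δ(A,B) = sup_{a ∈ A} inf_{b ∈ B} ‖a - b‖`. -/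
def pdist {E : Type*} [NormedAddCommGroup E] (A B : Set E) : ℝ :=
  sSup ((fun a => sInf ((fun b => ‖a - b‖) '' B)) '' A)

/-- Sublevel sets of a lower semicontinuous function on a closed set are closed. -/
lemma lsc_sublevel_closed {E : Type*} [TopologicalSpace E] {s : Set E}
    (hs : IsClosed s) {f : E → ℝ} (hf : LowerSemicontinuousOn f s) (c : ℝ) :
    IsClosed {x ∈ s | f x ≤ c} := by
  rw [isClosed_iff_clusterPt]
  intro x hx
  have hK : {x ∈ s | f x ≤ c} ⊆ s := fun y hy => hy.1
  have hxs : x ∈ s := by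
    rw [isClosed_iff_clusterPt] at hs
    exact hs x (hx.mono (le_principal_iff.mpr (mem_principal.mpr hK)))
  refine ⟨hxs, ?_⟩
  by_contra hlt
  push_neg at hlt
  have h1 : ∀ᶠ y in 𝓝[s] x, c < f y := hf x hxs c hlt
  have hle : 𝓝 x ⊓ Filter.principal {x ∈ s | f x ≤ c} ≤ 𝓝[s] x :=
    inf_le_inf_left _ (Filter.principal_mono.mpr hK)
  have h2 : ∀ᶠ y in 𝓝 x ⊓ Filter.principal {x ∈ s | f x ≤ c}, c < f y := hle h1
  have h3 : ∀ᶠ y in 𝓝 x ⊓ Filter.principal {x ∈ s | f x ≤ c}, f y ≤ c :=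
    Filter.eventually_inf_principal.mpr (Filter.Eventually.of_forall fun y hy => hy.2)
  have : ∀ᶠ _y in 𝓝 x ⊓ Filter.principal {x ∈ s | f x ≤ c}, False :=
    h2.mp (h3.mono fun y h3 h2 => absurd h3 (not_le.mpr h2))
  exact hx.ne (by simpa using this)

/-- A lower semicontinuous function attains its minimum on a nonempty compact set. -/
lemma lsc_exists_min {E : Type*} [TopologicalSpace E] [T2Space E] {s : Set E}
    (hcomp : IsCompact s) (hne : s.Nonempty) {f : E → ℝ}
    (hf : LowerSemicontinuousOn f s) :
    ∃ x ∈ s, ∀ y ∈ s, f x ≤ f y := by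
  haveI : Nonempty s := hne.to_subtype
  set t : s → Set E := fun y => {x ∈ s | f x ≤ f y.1} with ht
  have htcl : ∀ y, IsClosed (t y) := fun y =>
    lsc_sublevel_closed hcomp.isClosed hf (f y.1)
  have htsub : ∀ y, t y ⊆ s := fun y x hx => hx.1
  have htc : ∀ y, IsCompact (t y) := fun y => hcomp.of_isClosed_subset (htcl y) (htsub y)
  have htn : ∀ y, (t y).Nonempty := fun y => ⟨y.1, y.2, le_refl _⟩
  have htd : Directed (· ⊇ ·) t := by
    intro y z
    rcases le_total (f y.1) (f z.1) with h | h
    · exact ⟨y, fun x hx => hx, fun x hx => ⟨hx.1, hx.2.trans h⟩⟩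
    · exact ⟨z, fun x hx => ⟨hx.1, hx.2.trans h⟩, fun x hx => hx⟩
  obtain ⟨x, hx⟩ := IsCompact.nonempty_iInter_of_directed_nonempty_isCompact_isClosed
    t htd htn htc htcl
  simp only [Set.mem_iInter] at hx
  obtain ⟨y0⟩ := (inferInstance : Nonempty s)
  exact ⟨x, (hx y0).1, fun y hy => (hx ⟨y, hy⟩).2⟩

/-- Lipschitzian behavior of the ε-optimal solution set (Theorem 1.1 /
Ermoliev–Norkin): for a lower semicontinuous convex function on a nonempty
compact convex set, `Δ(X_{ε'}, X_ε) ≤ ((ε' - ε)/ε) · D_X`. -/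
theorem pessimistic_distance_eps_optimal_sets
    {p : ℕ} (X : Set (EuclideanSpace ℝ (Fin p)))
    (hXne : X.Nonempty) (hXcomp : IsCompact X) (hXconv : Convex ℝ X)
    (f : EuclideanSpace ℝ (Fin p) → ℝ)
    (hf_lsc : LowerSemicontinuousOn f X) (hf_conv : ConvexOn ℝ X f)
    (DX : ℝ) (hDX : DX = sSup (Set.image2 (fun x x' => ‖x - x'‖) X X))
    (θ : ℝ) (hθ : θ = sInf (f '' X))
    (ε ε' : ℝ) (hε : 0 < ε) (hεε' : ε ≤ ε') :
    pdist {x ∈ X | f x ≤ θ + ε'} {x ∈ X | f x ≤ θ + ε} ≤ ((ε' - ε) / ε) * DX := by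
  obtain ⟨z, hzX, hzmin⟩ := lsc_exists_min hXcomp hXne hf_lsc
  have hε' : 0 < ε' := lt_of_lt_of_le hε hεε'
  -- θ = f z
  have hθz : θ = f z := by
    rw [hθ]
    exact csInf_eq_of_forall_ge_of_forall_gt_exists_lt
      (⟨f z, ⟨z, hzX, rfl⟩⟩ : (f '' X).Nonempty)
      (by rintro _ ⟨y, hyX, rfl⟩; exact hzmin y hyX)
      (fun w hw => ⟨f z, ⟨z, hzX, rfl⟩, hw⟩)
  -- bound on diameter
  obtain ⟨C, hC⟩ := isBounded_iff_forall_norm_le.mp hXcomp.isBounded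
  have hbdd : BddAbove (Set.image2 (fun x x' => ‖x - x'‖) X X) := by
    refine ⟨2 * C, ?_⟩
    rintro v ⟨x, hx, x', hx', rfl⟩
    calc ‖x - x'‖ ≤ ‖x‖ + ‖x'‖ := norm_sub_le _ _
      _ ≤ C + C := add_le_add (hC x hx) (hC x' hx')
      _ = 2 * C := by ring
  have hDXnn : 0 ≤ DX := by
    obtain ⟨x0, hx0⟩ := hXne
    have : ‖x0 - x0‖ ≤ DX := hDX ▸ le_csSup hbdd (Set.mem_image2_of_mem hx0 hx0)
    simpa using this
  have hRHSnn : 0 ≤ ((ε' - ε) / ε) * DX :=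
    mul_nonneg (div_nonneg (sub_nonneg.mpr hεε') hε.le) hDXnn
  -- main bound
  apply Real.sSup_le _ hRHSnn
  rintro v ⟨a, ⟨haX, haf⟩, rfl⟩
  set t : ℝ := (ε' - ε) / ε' with htdef
  have ht0 : 0 ≤ t := div_nonneg (sub_nonneg.mpr hεε') hε'.le
  have ht1 : t ≤ 1 := by
    rw [htdef, div_le_one hε']
    linarith
  have hs0 : 0 ≤ 1 - t := by linarith
  set y : EuclideanSpace ℝ (Fin p) := (1 - t) • a + t • z with hydef
  have hyX : y ∈ X := hXconv haX hzX hs0 ht0 (by ring)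
  have hone : (1 : ℝ) - t = ε / ε' := by
    rw [htdef]
    field_simp
    ring
  have hfy : f y ≤ θ + ε := by
    have h1 : f y ≤ (1 - t) * f a + t * f z :=
      hf_conv.2 haX hzX hs0 ht0 (by ring)
    have h2 : (1 - t) * f a + t * f z ≤ (1 - t) * (θ + ε') + t * θ := by
      have := hzmin a haX
      nlinarith [hθz]
    have h3 : (1 - t) * (θ + ε') + t * θ = θ + ε := by
      have ht' : t = 1 - ε / ε' := by rw [← hone]; ring
      rw [hone, ht']
      field_simp
      ring
    linarith
  have hyB : y ∈ {x ∈ X | f x ≤ θ + ε} := ⟨hyX, hfy⟩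
  have hay : a - y = t • (a - z) := by
    rw [hydef]
    rw [sub_smul, one_smul, smul_sub]
    abel
  have hnorm : ‖a - y‖ = t * ‖a - z‖ := by
    rw [hay, norm_smul, Real.norm_eq_abs, abs_of_nonneg ht0]
  have haz : ‖a - z‖ ≤ DX := hDX ▸ le_csSup hbdd (Set.mem_image2_of_mem haX hzX)
  have hbound : ‖a - y‖ ≤ ((ε' - ε) / ε) * DX := by
    rw [hnorm]
    have hle : t ≤ (ε' - ε) / ε :=
      div_le_div_of_nonneg_left (sub_nonneg.mpr hεε') hε hεε'
    calc t * ‖a - z‖ ≤ t * DX := mul_le_mul_of_nonneg_left haz ht0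
      _ ≤ ((ε' - ε) / ε) * DX := mul_le_mul_of_nonneg_right hle hDXnn
  refine le_trans ?_ hbound
  exact csInf_le ⟨0, by rintro _ ⟨b, _, rfl⟩; exact norm_nonneg _⟩ ⟨y, hyB, rfl⟩

end
end

section
/- With the inexact compromise decision notation, for any choices x̂_{N,ρ,ε}(ξ^N) ∈ X̂_{N,ρ,ε}(ξ^N), x̄_{N,ε}(ξ^N) ∈ X̄_{N,ε}(ξ^N), x*_ε ∈ X*_ε, and x_{n,ε}(ξ^n_j) ∈ X_{n,ε}(ξ^n_j) for j = 1,…,m, the following holds: ‖x̂_{N,ρ,ε}(ξ^N) − x*_ε‖ ≤ ‖x̄_{N,ε}(ξ^N) − (1/m) Σ_{j=1}^m x_{n,ε}(ξ^n_j)‖ + ‖(1/m) Σ_{j=1}^m x_{n,ε}(ξ^n_j) − x*_ε‖ + 2√(ε/ρ). -/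
noncomputable section

lemma my_sqrt_add_le (a b : ℝ) (ha : 0 ≤ a) (hb : 0 ≤ b) :
    Real.sqrt (a + b) ≤ Real.sqrt a + Real.sqrt b := by
  have hsa := Real.sq_sqrt ha
  have hsb := Real.sq_sqrt hb
  have h : a + b ≤ (Real.sqrt a + Real.sqrt b) ^ 2 := by
    nlinarith [Real.sqrt_nonneg a, Real.sqrt_nonneg b]
  calc Real.sqrt (a + b) ≤ Real.sqrt ((Real.sqrt a + Real.sqrt b) ^ 2) :=
        Real.sqrt_le_sqrt h
    _ = _ := Real.sqrt_sq (by positivity)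

/-- Lemma 3.1: relation among an ε-optimal solution of the inexact compromise
decision problem, an ε-optimal solution of the aggregated SAA problem, an
ε-optimal solution of the true problem, and the ε-optimal solutions of the
`m` replications:
`‖x̂ − x*_ε‖ ≤ ‖x̄ − (1/m) Σⱼ x_{n,ε}(ξⁿⱼ)‖ + ‖(1/m) Σⱼ x_{n,ε}(ξⁿⱼ) − x*_ε‖ + 2√(ε/ρ)`. -/
theorem inexact_compromise_solution_relation
    {p d m n : ℕ} (hm : 2 ≤ m) (hn : 1 ≤ n)
    (X : Set (EuclideanSpace ℝ (Fin p))) (Ξ : Set (EuclideanSpace ℝ (Fin d)))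
    (hXne : X.Nonempty) (hXcomp : IsCompact X) (hXconv : Convex ℝ X)
    (F : EuclideanSpace ℝ (Fin p) → EuclideanSpace ℝ (Fin d) → ℝ)
    (LF γ : ℝ) (hLF : 0 < LF) (hγ : 0 < γ) (hγ1 : γ ≤ 1)
    (hHolder : ∀ x ∈ X, ∀ y ∈ X, ∀ ζ ∈ Ξ, |F x ζ - F y ζ| ≤ LF * ‖x - y‖ ^ γ)
    (MF : ℝ) (hMF : ∀ x ∈ X, ∀ ζ ∈ Ξ, |F x ζ| < MF)
    -- the true objective and its optimal value
    (f : EuclideanSpace ℝ (Fin p) → ℝ) (θstar : ℝ) (hθstar : θstar = sInf (f '' X))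
    -- the samples and SAA objectives of the `m` replications
    (ξ : Fin m → Fin n → EuclideanSpace ℝ (Fin d)) (hξΞ : ∀ i j, ξ i j ∈ Ξ)
    (fn : Fin m → EuclideanSpace ℝ (Fin p) → ℝ)
    (hfn : ∀ i x, fn i x = (1 / n : ℝ) * ∑ j, F x (ξ i j))
    (fbar : EuclideanSpace ℝ (Fin p) → ℝ)
    (hfbar : ∀ x, fbar x = (1 / m : ℝ) * ∑ i, fn i x)
    (ε ρ : ℝ) (hε : 0 < ε) (hρ : 0 < ρ)
    -- ε-optimal solutions of each replication
    (xsel : Fin m → EuclideanSpace ℝ (Fin p))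
    (hxsel : ∀ j, xsel j ∈ X ∧ fn j (xsel j) ≤ sInf (fn j '' X) + ε)
    -- the average of the replication solutions
    (xavg : EuclideanSpace ℝ (Fin p)) (hxavg : xavg = (m : ℝ)⁻¹ • ∑ j, xsel j)
    -- an ε-optimal solution of the aggregated SAA problem
    (xbar : EuclideanSpace ℝ (Fin p))
    (hxbar : xbar ∈ X ∧ fbar xbar ≤ sInf (fbar '' X) + ε)
    -- the regularized (inexact compromise) objective and an ε-optimal solution
    (g : EuclideanSpace ℝ (Fin p) → ℝ)
    (hg : ∀ x, g x = fbar x + ρ / 2 * ‖x - xavg‖ ^ 2)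
    (xhat : EuclideanSpace ℝ (Fin p))
    (hxhat : xhat ∈ X ∧ g xhat ≤ sInf (g '' X) + ε)
    -- an ε-optimal solution of the true problem
    (xstar : EuclideanSpace ℝ (Fin p)) (hxstar : xstar ∈ X ∧ f xstar ≤ θstar + ε) :
    ‖xhat - xstar‖ ≤ ‖xbar - xavg‖ + ‖xavg - xstar‖ + 2 * Real.sqrt (ε / ρ) := by

  have hnpos : (0:ℝ) < n := by exact_mod_cast Nat.lt_of_lt_of_le Nat.zero_lt_one hn
  have hmpos : (0:ℝ) < m := by exact_mod_cast Nat.lt_of_lt_of_le Nat.zero_lt_two hm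
  -- lower bound on fn
  have hfnlb : ∀ i, ∀ x ∈ X, -MF ≤ fn i x := by
    intro i x hx
    rw [hfn]
    have hsum : (n : ℝ) * (-MF) ≤ ∑ j, F x (ξ i j) := by
      have := Finset.card_nsmul_le_sum Finset.univ (fun j => F x (ξ i j)) (-MF)
        (fun j _ => le_of_lt (abs_lt.mp (hMF x hx (ξ i j) (hξΞ i j))).1)
      simpa [nsmul_eq_mul] using this
    have h2 : (1 / n : ℝ) * ((n:ℝ) * (-MF)) ≤ (1 / n : ℝ) * ∑ j, F x (ξ i j) :=
      mul_le_mul_of_nonneg_left hsum (by positivity)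
    calc -MF = (1 / n : ℝ) * ((n:ℝ) * (-MF)) := by field_simp
      _ ≤ _ := h2
  have hfbarlb : ∀ x ∈ X, -MF ≤ fbar x := by
    intro x hx
    rw [hfbar]
    have hsum : (m : ℝ) * (-MF) ≤ ∑ i, fn i x := by
      have := Finset.card_nsmul_le_sum Finset.univ (fun i => fn i x) (-MF)
        (fun i _ => hfnlb i x hx)
      simpa [nsmul_eq_mul] using this
    have h2 : (1 / m : ℝ) * ((m:ℝ) * (-MF)) ≤ (1 / m : ℝ) * ∑ i, fn i x :=
      mul_le_mul_of_nonneg_left hsum (by positivity)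
    calc -MF = (1 / m : ℝ) * ((m:ℝ) * (-MF)) := by field_simp
      _ ≤ _ := h2
  have hbddf : BddBelow (fbar '' X) := by
    refine ⟨-MF, ?_⟩
    rintro y ⟨x, hx, rfl⟩
    exact hfbarlb x hx
  have hbddg : BddBelow (g '' X) := by
    refine ⟨-MF, ?_⟩
    rintro y ⟨x, hx, rfl⟩
    rw [hg]
    have : (0:ℝ) ≤ ρ / 2 * ‖x - xavg‖ ^ 2 := by positivity
    linarith [hfbarlb x hx]
  have h1 : g xhat ≤ g xbar + ε := by
    have := csInf_le hbddg ⟨xbar, hxbar.1, rfl⟩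
    linarith [hxhat.2]
  have h2 : fbar xbar - ε ≤ fbar xhat := by
    have := csInf_le hbddf ⟨xhat, hxhat.1, rfl⟩
    linarith [hxbar.2]
  have hkey : ‖xhat - xavg‖ ^ 2 ≤ ‖xbar - xavg‖ ^ 2 + 4 * ε / ρ := by
    have e1 := hg xhat
    have e2 := hg xbar
    have : ρ / 2 * ‖xhat - xavg‖ ^ 2 ≤ ρ / 2 * ‖xbar - xavg‖ ^ 2 + 2 * ε := by linarith
    have hρ' : (0:ℝ) < ρ / 2 := by linarith
    have h3 : ρ / 2 * ‖xbar - xavg‖ ^ 2 + 2 * ε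
        = ρ / 2 * (‖xbar - xavg‖ ^ 2 + 4 * ε / ρ) := by field_simp; ring
    exact le_of_mul_le_mul_left (by linarith) hρ'
  have hsub := my_sqrt_add_le (‖xbar - xavg‖ ^ 2) (4 * ε / ρ)
    (by positivity) (by positivity)
  have h4 : Real.sqrt (4 * ε / ρ) = 2 * Real.sqrt (ε / ρ) := by
    rw [show (4 * ε / ρ) = (2 * Real.sqrt (ε / ρ)) ^ 2 by
      rw [mul_pow, Real.sq_sqrt (by positivity : (0:ℝ) ≤ ε / ρ)]; ring]
    exact Real.sqrt_sq (by positivity)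
  rw [Real.sqrt_sq (norm_nonneg _), h4] at hsub
  have hsq : ‖xhat - xavg‖ ≤ ‖xbar - xavg‖ + 2 * Real.sqrt (ε / ρ) := by
    calc ‖xhat - xavg‖ = Real.sqrt (‖xhat - xavg‖ ^ 2) :=
          (Real.sqrt_sq (norm_nonneg _)).symm
      _ ≤ Real.sqrt (‖xbar - xavg‖ ^ 2 + 4 * ε / ρ) := Real.sqrt_le_sqrt hkey
      _ ≤ _ := hsub
  have tri := dist_triangle xhat xavg xstar
  simp only [dist_eq_norm] at tri
  linarith

end
end

section
/- With the inexact compromise decision notation, for any choices x_{n,ε}(ξ^n_j) ∈ X_{n,ε}(ξ^n_j), j = 1,…,m, the pessimistic distance satisfies Δ( X̂_{N,ρ,ε}(ξ^N), X*_ε ) ≤ inf_{x ∈ X̄_{N,ε}(ξ^N)} ‖(1/m) Σ_{j=1}^m x_{n,ε}(ξ^n_j) − x‖ + inf_{x ∈ X*_ε} ‖(1/m) Σ_{j=1}^m x_{n,ε}(ξ^n_j) − x‖ + 2√(ε/ρ). -/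
noncomputable section

/-- Lemma 3.2: the pessimistic distance of the ε-optimal set of the inexact
compromise decision problem to the ε-optimal set of the true problem is bounded
by `inf_{x ∈ X̄_{N,ε}} ‖x̄ᵃᵛᵍ − x‖ + inf_{x ∈ X*_ε} ‖x̄ᵃᵛᵍ − x‖ + 2√(ε/ρ)`. -/
theorem inexact_compromise_pessimistic_distance_relation
    {p d m n : ℕ} (hm : 2 ≤ m) (hn : 1 ≤ n)
    (X : Set (EuclideanSpace ℝ (Fin p))) (Ξ : Set (EuclideanSpace ℝ (Fin d)))
    (hXne : X.Nonempty) (hXcomp : IsCompact X) (hXconv : Convex ℝ X)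
    (F : EuclideanSpace ℝ (Fin p) → EuclideanSpace ℝ (Fin d) → ℝ)
    (LF γ : ℝ) (hLF : 0 < LF) (hγ : 0 < γ) (hγ1 : γ ≤ 1)
    (hHolder : ∀ x ∈ X, ∀ y ∈ X, ∀ ζ ∈ Ξ, |F x ζ - F y ζ| ≤ LF * ‖x - y‖ ^ γ)
    (MF : ℝ) (hMF : ∀ x ∈ X, ∀ ζ ∈ Ξ, |F x ζ| < MF)
    -- the true objective: lower semicontinuous on `X`, with optimal value `θ*`
    (f : EuclideanSpace ℝ (Fin p) → ℝ) (hf_lsc : LowerSemicontinuousOn f X)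
    (θstar : ℝ) (hθstar : θstar = sInf (f '' X))
    -- the samples and SAA objectives of the `m` replications
    (ξ : Fin m → Fin n → EuclideanSpace ℝ (Fin d)) (hξΞ : ∀ i j, ξ i j ∈ Ξ)
    (fn : Fin m → EuclideanSpace ℝ (Fin p) → ℝ)
    (hfn : ∀ i x, fn i x = (1 / n : ℝ) * ∑ j, F x (ξ i j))
    (fbar : EuclideanSpace ℝ (Fin p) → ℝ)
    (hfbar : ∀ x, fbar x = (1 / m : ℝ) * ∑ i, fn i x)
    (ε ρ : ℝ) (hε : 0 < ε) (hρ : 0 < ρ)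
    -- ε-optimal solutions of each replication, and their average
    (xsel : Fin m → EuclideanSpace ℝ (Fin p))
    (hxsel : ∀ j, xsel j ∈ X ∧ fn j (xsel j) ≤ sInf (fn j '' X) + ε)
    (xavg : EuclideanSpace ℝ (Fin p)) (hxavg : xavg = (m : ℝ)⁻¹ • ∑ j, xsel j)
    -- the ε-optimal sets of: the aggregated SAA problem, the inexact compromise
    -- problem, and the true problem
    (Xbar Xhat Xstar : Set (EuclideanSpace ℝ (Fin p)))
    (hXbar : Xbar = {x ∈ X | fbar x ≤ sInf (fbar '' X) + ε})
    (hXhat : Xhat = {x ∈ X |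
      fbar x + ρ / 2 * ‖x - xavg‖ ^ 2 ≤
        sInf ((fun y => fbar y + ρ / 2 * ‖y - xavg‖ ^ 2) '' X) + ε})
    (hXstar : Xstar = {x ∈ X | f x ≤ θstar + ε}) :
    pdist Xhat Xstar ≤
      sInf ((fun x => ‖xavg - x‖) '' Xbar) +
        sInf ((fun x => ‖xavg - x‖) '' Xstar) + 2 * Real.sqrt (ε / ρ) := by
  have hmpos : (0:ℝ) < m := by
    exact_mod_cast lt_of_lt_of_le (by norm_num) hm
  have hnpos : (0:ℝ) < n := by exact_mod_cast hn
  -- `fbar` is bounded below by `-MF` on `X`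
  have hfn_lb : ∀ i, ∀ x ∈ X, -MF ≤ fn i x := by
    intro i x hx
    rw [hfn]
    have hsum : (n : ℝ) * (-MF) ≤ ∑ j, F x (ξ i j) := by
      calc (n : ℝ) * (-MF) = ∑ _j : Fin n, (-MF) := by
            simp [Finset.sum_const, mul_comm]
        _ ≤ ∑ j, F x (ξ i j) := by
            refine Finset.sum_le_sum fun j _ => ?_
            have := abs_lt.mp (hMF x hx (ξ i j) (hξΞ i j))
            linarith [this.1]
    have h1n : (0:ℝ) < 1 / n := by positivity
    calc -MF = (1 / n : ℝ) * ((n : ℝ) * (-MF)) := by field_simp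
      _ ≤ (1 / n : ℝ) * ∑ j, F x (ξ i j) := by
          exact mul_le_mul_of_nonneg_left hsum h1n.le
  have hfbar_lb : ∀ x ∈ X, -MF ≤ fbar x := by
    intro x hx
    rw [hfbar]
    have hsum : (m : ℝ) * (-MF) ≤ ∑ i, fn i x := by
      calc (m : ℝ) * (-MF) = ∑ _i : Fin m, (-MF) := by
            simp [Finset.sum_const, mul_comm]
        _ ≤ ∑ i, fn i x := Finset.sum_le_sum fun i _ => hfn_lb i x hx
    have h1m : (0:ℝ) < 1 / m := by positivity
    calc -MF = (1 / m : ℝ) * ((m : ℝ) * (-MF)) := by field_simp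
      _ ≤ (1 / m : ℝ) * ∑ i, fn i x := mul_le_mul_of_nonneg_left hsum h1m.le
  set g : EuclideanSpace ℝ (Fin p) → ℝ :=
    fun y => fbar y + ρ / 2 * ‖y - xavg‖ ^ 2 with hgdef
  have hbdd_fbar : BddBelow (fbar '' X) := by
    refine ⟨-MF, ?_⟩
    rintro _ ⟨x, hx, rfl⟩
    exact hfbar_lb x hx
  have hbdd_g : BddBelow (g '' X) := by
    refine ⟨-MF, ?_⟩
    rintro _ ⟨x, hx, rfl⟩
    have : (0:ℝ) ≤ ρ / 2 * ‖x - xavg‖ ^ 2 := by positivity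
    have := hfbar_lb x hx
    simp only [hgdef]
    linarith
  -- `Xbar` and `Xstar` are nonempty
  have hXbar_ne : Xbar.Nonempty := by
    obtain ⟨v, ⟨x, hx, rfl⟩, hv⟩ :=
      Real.lt_sInf_add_pos (hXne.image fbar) hε
    exact ⟨x, by rw [hXbar]; exact ⟨hx, hv.le⟩⟩
  have hXstar_ne : Xstar.Nonempty := by
    obtain ⟨v, ⟨x, hx, rfl⟩, hv⟩ :=
      Real.lt_sInf_add_pos (hXne.image f) hε
    exact ⟨x, by rw [hXstar]; exact ⟨hx, by rw [hθstar]; exact hv.le⟩⟩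
  have hbdd_norm : ∀ (z : EuclideanSpace ℝ (Fin p)) (S : Set (EuclideanSpace ℝ (Fin p))),
      BddBelow ((fun x => ‖z - x‖) '' S) := by
    intro z S
    refine ⟨0, ?_⟩
    rintro _ ⟨x, _, rfl⟩
    exact norm_nonneg _
  -- key geometric estimate
  have hkey : ∀ xh ∈ Xhat, ∀ xb ∈ Xbar,
      ‖xh - xavg‖ ≤ ‖xavg - xb‖ + 2 * Real.sqrt (ε / ρ) := by
    intro xh hxh xb hxb
    rw [hXhat] at hxh
    rw [hXbar] at hxb
    obtain ⟨hxhX, hxh2⟩ := hxh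
    obtain ⟨hxbX, hxb2⟩ := hxb
    have h1 : fbar xh + ρ / 2 * ‖xh - xavg‖ ^ 2 ≤
        fbar xb + ρ / 2 * ‖xb - xavg‖ ^ 2 + ε := by
      refine hxh2.trans (add_le_add_left ?_ ε)
      exact csInf_le hbdd_g ⟨xb, hxbX, rfl⟩
    have h2 : fbar xb ≤ fbar xh + ε := by
      refine hxb2.trans (add_le_add_left ?_ ε)
      exact csInf_le hbdd_fbar ⟨xh, hxhX, rfl⟩
    have hsq : ‖xh - xavg‖ ^ 2 ≤ ‖xb - xavg‖ ^ 2 + 4 * (ε / ρ) := by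
      have hρ2 : (0:ℝ) < ρ / 2 := by positivity
      have h3 : ρ / 2 * ‖xh - xavg‖ ^ 2 ≤ ρ / 2 * ‖xb - xavg‖ ^ 2 + 2 * ε := by
        linarith
      have hdiv : ρ * (ε / ρ) = ε := mul_div_cancel₀ ε (ne_of_gt hρ)
      nlinarith [h3, hdiv, hρ]
    have hs : Real.sqrt (ε / ρ) ^ 2 = ε / ρ :=
      Real.sq_sqrt (by positivity)
    have hns : (0:ℝ) ≤ Real.sqrt (ε / ρ) := Real.sqrt_nonneg _
    have hnb : (0:ℝ) ≤ ‖xb - xavg‖ := norm_nonneg _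
    have hnh : (0:ℝ) ≤ ‖xh - xavg‖ := norm_nonneg _
    have : ‖xh - xavg‖ ≤ ‖xb - xavg‖ + 2 * Real.sqrt (ε / ρ) := by
      nlinarith
    rwa [norm_sub_rev xavg xb]
  -- put everything together
  rw [pdist]
  refine Real.sSup_le ?_ ?_
  · rintro _ ⟨xh, hxh, rfl⟩
    -- inf over Xstar of ‖xh - ·‖ ≤ ‖xh - xavg‖ + inf over Xstar of ‖xavg - ·‖
    have step1 : sInf ((fun b => ‖xh - b‖) '' Xstar) ≤
        ‖xh - xavg‖ + sInf ((fun x => ‖xavg - x‖) '' Xstar) := by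
      have hforall : ∀ v ∈ (fun x => ‖xavg - x‖) '' Xstar,
          sInf ((fun b => ‖xh - b‖) '' Xstar) - ‖xh - xavg‖ ≤ v := by
        rintro _ ⟨b, hb, rfl⟩
        have h1 : sInf ((fun b => ‖xh - b‖) '' Xstar) ≤ ‖xh - b‖ :=
          csInf_le (hbdd_norm xh Xstar) ⟨b, hb, rfl⟩
        have h2 : ‖xh - b‖ ≤ ‖xh - xavg‖ + ‖xavg - b‖ := by
          calc ‖xh - b‖ = ‖(xh - xavg) + (xavg - b)‖ := by abel_nf
            _ ≤ ‖xh - xavg‖ + ‖xavg - b‖ := norm_add_le _ _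
        simp only []
        linarith
      have h := le_csInf (hXstar_ne.image _) hforall
      linarith [h]
    have step2 : ‖xh - xavg‖ ≤
        sInf ((fun x => ‖xavg - x‖) '' Xbar) + 2 * Real.sqrt (ε / ρ) := by
      have hforall : ∀ v ∈ (fun x => ‖xavg - x‖) '' Xbar,
          ‖xh - xavg‖ - 2 * Real.sqrt (ε / ρ) ≤ v := by
        rintro _ ⟨b, hb, rfl⟩
        simp only []
        linarith [hkey xh hxh b hb]
      have h := le_csInf (hXbar_ne.image (fun x => ‖xavg - x‖)) hforall
      linarith [h]
    linarith
  · have h1 : (0:ℝ) ≤ sInf ((fun x => ‖xavg - x‖) '' Xbar) :=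
      Real.sInf_nonneg (by rintro _ ⟨x, _, rfl⟩; exact norm_nonneg _)
    have h2 : (0:ℝ) ≤ sInf ((fun x => ‖xavg - x‖) '' Xstar) :=
      Real.sInf_nonneg (by rintro _ ⟨x, _, rfl⟩; exact norm_nonneg _)
    positivity

end
end

section
/- Under the standing assumptions on X and F and convexity of F(·,ξ) for every ξ ∈ Ξ, for any choices x_{n,ε}(ξ^n_j) ∈ X_{n,ε}(ξ^n_j), j = 1,…,m: inf_{x ∈ X̄_{N,ε}(ξ^N)} ‖(1/m) Σ_{j=1}^m x_{n,ε}(ξ^n_j) − x‖ ≤ ( (1/m²) Σ_{i≠j} [ δ_n^f(ξ^n_i) + δ_n^f(ξ^n_j) ] / ε )·D_X, where the sum runs over ordered pairs i,j ∈ {1,…,m} with i ≠ j. -/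
open MeasureTheory

noncomputable section

lemma myConvexOn_sum {ι E : Type*} [AddCommGroup E] [Module ℝ E] (t : Finset ι)
    (s : Set E) (hs : Convex ℝ s) (g : ι → E → ℝ) (h : ∀ i ∈ t, ConvexOn ℝ s (g i)) :
    ConvexOn ℝ s (fun x => ∑ i ∈ t, g i x) := by
  classical
  induction t using Finset.cons_induction with
  | empty => simpa using convexOn_const 0 hs
  | cons a t ha ih =>
    simp only [Finset.sum_cons]
    exact (h a (Finset.mem_cons_self a t)).add (ih fun i hi => h i (Finset.mem_cons_of_mem hi))

/-- Lemma 3.3: the distance of the average of the replication ε-optimal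
solutions to the ε-optimal set of the aggregated SAA problem is bounded by
`((1/m²) Σ_{i≠j} [δₙᶠ(ξⁿᵢ) + δₙᶠ(ξⁿⱼ)] / ε) · D_X`. -/
theorem average_solution_distance_to_aggregated_eps_optimal_set
    {p d m n : ℕ} (hm : 1 ≤ m) (hn : 1 ≤ n)
    (X : Set (EuclideanSpace ℝ (Fin p))) (Ξ : Set (EuclideanSpace ℝ (Fin d)))
    (hXne : X.Nonempty) (hXcomp : IsCompact X) (hXconv : Convex ℝ X)
    (F : EuclideanSpace ℝ (Fin p) → EuclideanSpace ℝ (Fin d) → ℝ)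
    (hFcont : ∀ ζ ∈ Ξ, ContinuousOn (fun x => F x ζ) X)
    (hFmeas : ∀ x ∈ X, Measurable (F x))
    (LF γ : ℝ) (hLF : 0 < LF) (hγ : 0 < γ) (hγ1 : γ ≤ 1)
    (hHolder : ∀ x ∈ X, ∀ y ∈ X, ∀ ζ ∈ Ξ, |F x ζ - F y ζ| ≤ LF * ‖x - y‖ ^ γ)
    (MF : ℝ) (hMF : ∀ x ∈ X, ∀ ζ ∈ Ξ, |F x ζ| < MF)
    (hFconvex : ∀ ζ ∈ Ξ, ConvexOn ℝ X fun x => F x ζ)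
    -- the distribution `μ` of `ξ̃` on `Ξ` and the true objective `f`
    (μ : Measure (EuclideanSpace ℝ (Fin d))) [IsProbabilityMeasure μ]
    (hμΞ : ∀ᵐ z ∂μ, z ∈ Ξ)
    (f : EuclideanSpace ℝ (Fin p) → ℝ) (hf : ∀ x, f x = ∫ z, F x z ∂μ)
    -- the samples and SAA objectives of the `m` replications
    (ξ : Fin m → Fin n → EuclideanSpace ℝ (Fin d)) (hξΞ : ∀ i j, ξ i j ∈ Ξ)
    (fn : Fin m → EuclideanSpace ℝ (Fin p) → ℝ)
    (hfn : ∀ i x, fn i x = (1 / n : ℝ) * ∑ j, F x (ξ i j))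
    (fbar : EuclideanSpace ℝ (Fin p) → ℝ)
    (hfbar : ∀ x, fbar x = (1 / m : ℝ) * ∑ i, fn i x)
    -- the supremum of the sampling error of each replication
    (δ : Fin m → ℝ) (hδ : ∀ i, δ i = sSup ((fun x => |fn i x - f x|) '' X))
    (ε : ℝ) (hε : 0 < ε)
    -- ε-optimal solutions of each replication, and their average
    (xsel : Fin m → EuclideanSpace ℝ (Fin p))
    (hxsel : ∀ j, xsel j ∈ X ∧ fn j (xsel j) ≤ sInf (fn j '' X) + ε)
    (xavg : EuclideanSpace ℝ (Fin p)) (hxavg : xavg = (m : ℝ)⁻¹ • ∑ j, xsel j)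
    -- the ε-optimal set of the aggregated SAA problem
    (Xbar : Set (EuclideanSpace ℝ (Fin p)))
    (hXbar : Xbar = {x ∈ X | fbar x ≤ sInf (fbar '' X) + ε})
    (DX : ℝ) (hDX : DX = sSup (Set.image2 (fun x x' => ‖x - x'‖) X X)) :
    sInf ((fun x => ‖xavg - x‖) '' Xbar) ≤
      (((1 / m ^ 2 : ℝ) *
          ∑ q ∈ Finset.univ.filter (fun q : Fin m × Fin m => q.1 ≠ q.2),
            (δ q.1 + δ q.2)) / ε) * DX := by
  classical
  have hmne : (m : ℝ) ≠ 0 := by positivity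
  have hnne : (n : ℝ) ≠ 0 := by positivity
  -- boundedness of fn
  have hfnb : ∀ i, ∀ x ∈ X, |fn i x| ≤ MF := by
    intro i x hx
    rw [hfn]
    calc |(1 / n : ℝ) * ∑ j, F x (ξ i j)|
        = (1 / n : ℝ) * |∑ j, F x (ξ i j)| := by
          rw [abs_mul, abs_of_nonneg (by positivity)]
      _ ≤ (1 / n : ℝ) * ∑ j, |F x (ξ i j)| := by
          gcongr
          exact Finset.abs_sum_le_sum_abs _ _
      _ ≤ (1 / n : ℝ) * ∑ _j : Fin n, MF := by
          gcongr with j _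
          exact (hMF x hx _ (hξΞ i j)).le
      _ = MF := by
          rw [Finset.sum_const, Finset.card_univ, Fintype.card_fin, nsmul_eq_mul]
          field_simp
  -- boundedness of f
  have hfb : ∀ x ∈ X, |f x| ≤ MF := by
    intro x hx
    rw [hf]
    have h := norm_integral_le_of_norm_le_const (μ := μ) (f := fun z => F x z) (C := MF)
      (by filter_upwards [hμΞ] with z hz; simpa using (hMF x hx z hz).le)
    simpa [measure_univ] using h
  -- δ is an upper bound on the sampling error, and nonnegative
  have hδub : ∀ i, ∀ x ∈ X, |fn i x - f x| ≤ δ i := by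
    intro i x hx
    rw [hδ]
    apply le_csSup
    · refine ⟨2 * MF, ?_⟩
      rintro y ⟨z, hz, rfl⟩
      calc |fn i z - f z| ≤ |fn i z| + |f z| := abs_sub _ _
        _ ≤ MF + MF := add_le_add (hfnb i z hz) (hfb z hz)
        _ = 2 * MF := by ring
    · exact ⟨x, hx, rfl⟩
  obtain ⟨x₀, hx₀⟩ := id hXne
  have hδ0 : ∀ i, 0 ≤ δ i := fun i => le_trans (abs_nonneg _) (hδub i x₀ hx₀)
  -- continuity
  have hfncont : ∀ i, ContinuousOn (fn i) X := by
    intro i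
    have he : fn i = fun x => (1 / n : ℝ) * ∑ j, F x (ξ i j) := funext (hfn i)
    rw [he]
    exact continuousOn_const.mul (continuousOn_finset_sum _ fun j _ => hFcont _ (hξΞ i j))
  have hfbarcont : ContinuousOn fbar X := by
    have he : fbar = fun x => (1 / m : ℝ) * ∑ i, fn i x := funext hfbar
    rw [he]
    exact continuousOn_const.mul (continuousOn_finset_sum _ fun i _ => hfncont i)
  -- convexity
  have hfnconv : ∀ i, ConvexOn ℝ X (fn i) := by
    intro i
    have he : fn i = fun x => (1 / n : ℝ) * ∑ j, F x (ξ i j) := funext (hfn i)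
    rw [he]
    have h := ConvexOn.smul (c := (1 / n : ℝ)) (by positivity)
      (myConvexOn_sum Finset.univ X hXconv (fun j x => F x (ξ i j))
        (fun j _ => hFconvex _ (hξΞ i j)))
    simpa [smul_eq_mul] using h
  have hfbarconv : ConvexOn ℝ X fbar := by
    have he : fbar = fun x => (1 / m : ℝ) * ∑ i, fn i x := funext hfbar
    rw [he]
    have h := ConvexOn.smul (c := (1 / m : ℝ)) (by positivity)
      (myConvexOn_sum Finset.univ X hXconv (fun i x => fn i x) (fun i _ => hfnconv i))
    simpa [smul_eq_mul] using h
  -- minimizer of fbar on X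
  obtain ⟨xstar, hxstarX, hxstarmin⟩ := hXcomp.exists_isMinOn hXne hfbarcont
  have hsInfbar : sInf (fbar '' X) = fbar xstar := by
    apply IsLeast.csInf_eq
    refine ⟨⟨xstar, hxstarX, rfl⟩, ?_⟩
    rintro y ⟨z, hz, rfl⟩
    exact hxstarmin hz
  -- sInf of each fn is at most fn at xstar
  have hsInffn : ∀ i, sInf (fn i '' X) ≤ fn i xstar := by
    intro i
    apply csInf_le
    · refine ⟨-MF, ?_⟩
      rintro y ⟨z, hz, rfl⟩
      exact neg_le_of_abs_le (hfnb i z hz)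
    · exact ⟨xstar, hxstarX, rfl⟩
  -- xavg ∈ X
  have hxavg' : xavg = ∑ i, (m : ℝ)⁻¹ • xsel i := by rw [hxavg, Finset.smul_sum]
  have hwsum : ∑ _i : Fin m, (m : ℝ)⁻¹ = 1 := by
    rw [Finset.sum_const, Finset.card_univ, Fintype.card_fin, nsmul_eq_mul,
      mul_inv_cancel₀ hmne]
  have hxavgX : xavg ∈ X := by
    rw [hxavg']
    exact hXconv.sum_mem (fun i _ => by positivity) hwsum (fun i _ => (hxsel i).1)
  -- Jensen for each fn j at xavg
  have h2 : ∀ j, fn j xavg ≤ ∑ i, (m : ℝ)⁻¹ * fn j (xsel i) := by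
    intro j
    have h := (hfnconv j).map_sum_le (t := Finset.univ) (w := fun _ => (m : ℝ)⁻¹)
      (p := xsel) (fun i _ => by positivity) hwsum (fun i _ => (hxsel i).1)
    rw [← hxavg'] at h
    simpa [smul_eq_mul] using h
  -- pairwise bound
  set c : Fin m → Fin m → ℝ := fun i j => if i = j then 0 else δ i + δ j with hc
  have hpair : ∀ i j, fn j (xsel i) ≤ fn i xstar + ε + c i j := by
    intro i j
    by_cases hij : i = j
    · subst hij
      simp only [hc, if_pos rfl, add_zero]
      linarith [(hxsel i).2, hsInffn i]
    · simp only [hc, if_neg hij]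
      have a1 : fn j (xsel i) - f (xsel i) ≤ δ j :=
        le_of_abs_le (hδub j _ (hxsel i).1)
      have a2 : f (xsel i) - fn i (xsel i) ≤ δ i := by
        have := le_of_abs_le (abs_sub_comm (fn i (xsel i)) (f (xsel i)) ▸
          hδub i _ (hxsel i).1)
        linarith
      linarith [(hxsel i).2, hsInffn i]
  have hc0 : ∀ i j, 0 ≤ c i j := by
    intro i j
    simp only [hc]
    split
    · exact le_refl 0
    · exact add_nonneg (hδ0 _) (hδ0 _)
  -- the key quantity Δ
  set S := ∑ q ∈ Finset.univ.filter (fun q : Fin m × Fin m => q.1 ≠ q.2), (δ q.1 + δ q.2)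
    with hSdef
  set Δ : ℝ := (1 / m ^ 2 : ℝ) * S with hΔdef
  have hS : S = ∑ j, ∑ i, c i j := by
    rw [hSdef, Finset.sum_filter, Fintype.sum_prod_type, Finset.sum_comm]
    refine Finset.sum_congr rfl fun j _ => Finset.sum_congr rfl fun i _ => ?_
    simp only [hc, ne_eq, ite_not]
  have hΔ0 : 0 ≤ Δ := by
    rw [hΔdef, hS]
    have : (0:ℝ) ≤ ∑ j, ∑ i, c i j :=
      Finset.sum_nonneg fun j _ => Finset.sum_nonneg fun i _ => hc0 i j
    positivity
  -- key inequality : fbar xavg ≤ fbar xstar + ε + Δ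
  have hmain : fbar xavg ≤ fbar xstar + ε + Δ := by
    have step1 : fbar xavg ≤ (1 / m : ℝ) * ∑ j, ∑ i, (m : ℝ)⁻¹ * fn j (xsel i) := by
      rw [hfbar]
      apply mul_le_mul_of_nonneg_left (Finset.sum_le_sum fun j _ => h2 j) (by positivity)
    have step2 : (1 / m : ℝ) * ∑ j, ∑ i, (m : ℝ)⁻¹ * fn j (xsel i)
        ≤ (1 / m : ℝ) * ∑ j, ∑ i, (m : ℝ)⁻¹ * (fn i xstar + ε + c i j) := by
      apply mul_le_mul_of_nonneg_left _ (by positivity)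
      apply Finset.sum_le_sum
      intro j _
      apply Finset.sum_le_sum
      intro i _
      exact mul_le_mul_of_nonneg_left (hpair i j) (by positivity)
    have step3 : (1 / m : ℝ) * ∑ j, ∑ i, (m : ℝ)⁻¹ * (fn i xstar + ε + c i j)
        = fbar xstar + ε + Δ := by
      have hinner : ∀ j, ∑ i, (m : ℝ)⁻¹ * (fn i xstar + ε + c i j)
          = (m : ℝ)⁻¹ * ((∑ i, fn i xstar) + (m : ℝ) * ε + ∑ i, c i j) := by
        intro j
        rw [← Finset.mul_sum]
        congr 1
        rw [Finset.sum_add_distrib, Finset.sum_add_distrib, Finset.sum_const,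
          Finset.card_univ, Fintype.card_fin, nsmul_eq_mul]
      simp only [hinner]
      rw [← Finset.mul_sum, Finset.sum_add_distrib, Finset.sum_add_distrib,
        Finset.sum_const, Finset.card_univ, Fintype.card_fin, nsmul_eq_mul,
        hfbar, hΔdef, hS]
      field_simp
      simp only [Finset.sum_const, Finset.card_univ, Fintype.card_fin, nsmul_eq_mul]
      ring
    linarith [le_trans step1 step2, step3.le]
  -- construct the point xt on the segment
  have hεΔ : 0 < ε + Δ := by linarith
  set t : ℝ := Δ / (ε + Δ) with htdef
  have ht0 : 0 ≤ t := by positivity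
  have ht1 : t ≤ 1 := by
    rw [htdef, div_le_one hεΔ]; linarith
  have h1t : (1 - t) * (ε + Δ) = ε := by
    rw [htdef]; field_simp; ring
  set xt : EuclideanSpace ℝ (Fin p) := t • xstar + (1 - t) • xavg with hxtdef
  have hxtX : xt ∈ X := hXconv hxstarX hxavgX ht0 (by linarith) (by ring)
  have hxtval : fbar xt ≤ fbar xstar + ε := by
    have hj := hfbarconv.2 hxstarX hxavgX ht0 (by linarith : (0:ℝ) ≤ 1 - t) (by ring)
    rw [smul_eq_mul, smul_eq_mul, ← hxtdef] at hj
    have hmul : (1 - t) * fbar xavg ≤ (1 - t) * (fbar xstar + ε + Δ) :=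
      mul_le_mul_of_nonneg_left hmain (by linarith)
    have hexp : t * fbar xstar + (1 - t) * (fbar xstar + ε + Δ)
        = fbar xstar + (1 - t) * (ε + Δ) := by ring
    linarith [hj, hmul, hexp, h1t]
  have hxtXbar : xt ∈ Xbar := by
    rw [hXbar]
    exact ⟨hxtX, by rw [hsInfbar]; exact hxtval⟩
  -- DX bounds
  have hDXbdd : BddAbove (Set.image2 (fun x x' => ‖x - x'‖) X X) := by
    have : Set.image2 (fun (x x' : EuclideanSpace ℝ (Fin p)) => ‖x - x'‖) X X =
        (fun q : EuclideanSpace ℝ (Fin p) × EuclideanSpace ℝ (Fin p) => ‖q.1 - q.2‖) ''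
          (X ×ˢ X) := (Set.image_prod _).symm
    rw [this]
    exact ((hXcomp.prod hXcomp).image ((continuous_fst.sub continuous_snd).norm)).bddAbove
  have hnormDX : ‖xavg - xstar‖ ≤ DX := by
    rw [hDX]
    exact le_csSup hDXbdd (Set.mem_image2_of_mem hxavgX hxstarX)
  have hDX0 : 0 ≤ DX := le_trans (norm_nonneg _) hnormDX
  -- distance bound
  have hdist : ‖xavg - xt‖ = t * ‖xavg - xstar‖ := by
    have : xavg - xt = t • (xavg - xstar) := by
      rw [hxtdef]; module
    rw [this, norm_smul, Real.norm_eq_abs, abs_of_nonneg ht0]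
  have htle : t ≤ Δ / ε := by
    rw [htdef]
    exact div_le_div_of_nonneg_left hΔ0 hε (by linarith)
  have hfinal : ‖xavg - xt‖ ≤ (Δ / ε) * DX := by
    rw [hdist]
    exact mul_le_mul htle hnormDX (norm_nonneg _) (by positivity)
  -- conclude via csInf
  have hcsinf : sInf ((fun x => ‖xavg - x‖) '' Xbar) ≤ ‖xavg - xt‖ := by
    apply csInf_le
    · refine ⟨0, ?_⟩
      rintro y ⟨z, hz, rfl⟩
      exact norm_nonneg _
    · exact ⟨xt, hxtXbar, rfl⟩
  calc sInf ((fun x => ‖xavg - x‖) '' Xbar) ≤ ‖xavg - xt‖ := hcsinf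
    _ ≤ (Δ / ε) * DX := hfinal
    _ = (((1 / m ^ 2 : ℝ) * S) / ε) * DX := by rw [hΔdef]

end
end

section
/- Under the standing assumptions on X and F and convexity of F(·,ξ) for every ξ ∈ Ξ, for any choices x_{n,ε}(ξ^n_j) ∈ X_{n,ε}(ξ^n_j), j = 1,…,m: inf_{x ∈ X*_ε} ‖(1/m) Σ_{j=1}^m x_{n,ε}(ξ^n_j) − x‖ ≤ ( (2/m) Σ_{j=1}^m δ_n^f(ξ^n_j) / ε )·D_X. -/
open MeasureTheory

noncomputable section

set_option maxHeartbeats 1000000 in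
/-- Lemma 3.4: the distance of the average of the replication ε-optimal
solutions to the ε-optimal set of the true problem is bounded by
`((2/m) Σⱼ δₙᶠ(ξⁿⱼ) / ε) · D_X`. -/
theorem average_solution_distance_to_true_eps_optimal_set
    {p d m n : ℕ} (hm : 1 ≤ m) (hn : 1 ≤ n)
    (X : Set (EuclideanSpace ℝ (Fin p))) (Ξ : Set (EuclideanSpace ℝ (Fin d)))
    (hXne : X.Nonempty) (hXcomp : IsCompact X) (hXconv : Convex ℝ X)
    (F : EuclideanSpace ℝ (Fin p) → EuclideanSpace ℝ (Fin d) → ℝ)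
    (hFcont : ∀ ζ ∈ Ξ, ContinuousOn (fun x => F x ζ) X)
    (hFmeas : ∀ x ∈ X, Measurable (F x))
    (LF γ : ℝ) (hLF : 0 < LF) (hγ : 0 < γ) (hγ1 : γ ≤ 1)
    (hHolder : ∀ x ∈ X, ∀ y ∈ X, ∀ ζ ∈ Ξ, |F x ζ - F y ζ| ≤ LF * ‖x - y‖ ^ γ)
    (MF : ℝ) (hMF : ∀ x ∈ X, ∀ ζ ∈ Ξ, |F x ζ| < MF)
    (hFconvex : ∀ ζ ∈ Ξ, ConvexOn ℝ X fun x => F x ζ)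
    -- the distribution `μ` of `ξ̃` on `Ξ` and the true objective `f`
    (μ : Measure (EuclideanSpace ℝ (Fin d))) [IsProbabilityMeasure μ]
    (hμΞ : ∀ᵐ z ∂μ, z ∈ Ξ)
    (f : EuclideanSpace ℝ (Fin p) → ℝ) (hf : ∀ x, f x = ∫ z, F x z ∂μ)
    -- the samples and SAA objectives of the `m` replications
    (ξ : Fin m → Fin n → EuclideanSpace ℝ (Fin d)) (hξΞ : ∀ i j, ξ i j ∈ Ξ)
    (fn : Fin m → EuclideanSpace ℝ (Fin p) → ℝ)
    (hfn : ∀ i x, fn i x = (1 / n : ℝ) * ∑ j, F x (ξ i j))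
    (fbar : EuclideanSpace ℝ (Fin p) → ℝ)
    (hfbar : ∀ x, fbar x = (1 / m : ℝ) * ∑ i, fn i x)
    -- the supremum of the sampling error of each replication
    (δ : Fin m → ℝ) (hδ : ∀ i, δ i = sSup ((fun x => |fn i x - f x|) '' X))
    (ε : ℝ) (hε : 0 < ε)
    -- ε-optimal solutions of each replication, and their average
    (xsel : Fin m → EuclideanSpace ℝ (Fin p))
    (hxsel : ∀ j, xsel j ∈ X ∧ fn j (xsel j) ≤ sInf (fn j '' X) + ε)
    (xavg : EuclideanSpace ℝ (Fin p)) (hxavg : xavg = (m : ℝ)⁻¹ • ∑ j, xsel j)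
    -- the ε-optimal set of the true problem
    (θstar : ℝ) (hθstar : θstar = sInf (f '' X))
    (Xstar : Set (EuclideanSpace ℝ (Fin p)))
    (hXstar : Xstar = {x ∈ X | f x ≤ θstar + ε})
    (DX : ℝ) (hDX : DX = sSup (Set.image2 (fun x x' => ‖x - x'‖) X X)) :
    sInf ((fun x => ‖xavg - x‖) '' Xstar) ≤
      (((2 / m : ℝ) * ∑ j, δ j) / ε) * DX := by
  have hm0 : (0:ℝ) < m := by exact_mod_cast hm
  have hn0 : (0:ℝ) < n := by exact_mod_cast hn
  -- integrability of F x for x ∈ X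
  have hInt : ∀ x ∈ X, Integrable (F x) μ := by
    intro x hx
    refine ⟨(hFmeas x hx).aestronglyMeasurable, ?_⟩
    apply HasFiniteIntegral.of_bounded (C := MF)
    filter_upwards [hμΞ] with z hz
    exact (le_of_lt (by simpa [Real.norm_eq_abs] using hMF x hx z hz))
  -- bound on f
  have hfb : ∀ x ∈ X, |f x| ≤ MF := by
    intro x hx
    rw [hf, ← Real.norm_eq_abs]
    have := norm_integral_le_of_norm_le_const (μ := μ) (f := F x) (C := MF) ?_
    · simpa using this
    · filter_upwards [hμΞ] with z hz
      exact le_of_lt (by simpa [Real.norm_eq_abs] using hMF x hx z hz)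
  -- bound on fn
  have hfnb : ∀ i, ∀ x ∈ X, |fn i x| ≤ MF := by
    intro i x hx
    rw [hfn]
    have h1 : |∑ j, F x (ξ i j)| ≤ ∑ j : Fin n, MF := by
      refine (Finset.abs_sum_le_sum_abs _ _).trans (Finset.sum_le_sum ?_)
      intro j _
      exact le_of_lt (hMF x hx _ (hξΞ i j))
    have h2 : |(1 / n : ℝ) * ∑ j, F x (ξ i j)| ≤ (1/n : ℝ) * ∑ j : Fin n, MF := by
      rw [abs_mul, abs_of_nonneg (by positivity : (0:ℝ) ≤ (1/n:ℝ))]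
      exact mul_le_mul_of_nonneg_left h1 (by positivity)
    refine h2.trans (le_of_eq ?_)
    rw [Finset.sum_const, Finset.card_univ, Fintype.card_fin, nsmul_eq_mul]
    field_simp
  -- δ properties
  have hδ0 : ∀ i, 0 ≤ δ i := by
    intro i
    rw [hδ]
    exact Real.sSup_nonneg (by rintro _ ⟨x, hx, rfl⟩; exact abs_nonneg _)
  have hδle : ∀ i, ∀ x ∈ X, |fn i x - f x| ≤ δ i := by
    intro i x hx
    rw [hδ]
    refine le_csSup ⟨2 * MF, ?_⟩ ⟨x, hx, rfl⟩
    rintro _ ⟨y, hy, rfl⟩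
    calc |fn i y - f y| ≤ |fn i y| + |f y| := abs_sub _ _
      _ ≤ MF + MF := add_le_add (hfnb i y hy) (hfb y hy)
      _ = 2 * MF := by ring
  -- convexity of f
  have hfconv : ConvexOn ℝ X f := by
    refine ⟨hXconv, ?_⟩
    intro x hx y hy a b ha hb hab
    have hmem := hXconv hx hy ha hb hab
    have key : ∫ z, F (a • x + b • y) z ∂μ ≤ ∫ z, (a * F x z + b * F y z) ∂μ := by
      refine integral_mono_ae (hInt _ hmem)
        (((hInt x hx).const_mul a).add ((hInt y hy).const_mul b)) ?_
      filter_upwards [hμΞ] with z hz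
      simpa [smul_eq_mul] using (hFconvex z hz).2 hx hy ha hb hab
    have : ∫ z, (a * F x z + b * F y z) ∂μ = a * f x + b * f y := by
      rw [integral_add ((hInt x hx).const_mul a) ((hInt y hy).const_mul b),
        integral_const_mul, integral_const_mul, hf x, hf y]
    simp only [smul_eq_mul]
    rw [hf]
    exact key.trans_eq this
  -- xavg is the convex combination with weights 1/m
  have hxavg' : xavg = ∑ j : Fin m, (1/m : ℝ) • xsel j := by
    rw [hxavg, Finset.smul_sum]
    simp [one_div]
  have hwsum : ∑ _j : Fin m, (1/m : ℝ) = 1 := by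
    rw [Finset.sum_const, Finset.card_univ, Fintype.card_fin, nsmul_eq_mul]
    field_simp
  have hxavgX : xavg ∈ X := by
    rw [hxavg']
    exact hXconv.sum_mem (fun i _ => by positivity) hwsum (fun i _ => (hxsel i).1)
  -- Jensen
  have hjensen : f xavg ≤ ∑ j : Fin m, (1/m : ℝ) * f (xsel j) := by
    rw [hxavg']
    simpa [smul_eq_mul] using
      hfconv.map_sum_le (w := fun _ => (1/m : ℝ)) (p := xsel) (t := Finset.univ)
        (fun i _ => by positivity) hwsum (fun i _ => (hxsel i).1)
  -- DX properties
  obtain ⟨R, hR⟩ := isBounded_iff_forall_norm_le.mp hXcomp.isBounded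
  have hbdd2 : BddAbove (Set.image2 (fun x x' => ‖x - x'‖) X X) := by
    refine ⟨R + R, ?_⟩
    rintro _ ⟨x, hx, x', hx', rfl⟩
    exact (norm_sub_le _ _).trans (add_le_add (hR x hx) (hR x' hx'))
  have hDX0 : 0 ≤ DX := by
    rw [hDX]
    exact Real.sSup_nonneg (by rintro _ ⟨x, hx, x', hx', rfl⟩; exact norm_nonneg _)
  have hDXle : ∀ x ∈ X, ∀ x' ∈ X, ‖x - x'‖ ≤ DX := by
    intro x hx x' hx'
    rw [hDX]
    exact le_csSup hbdd2 ⟨x, hx, x', hx', rfl⟩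
  set Δ : ℝ := (1/m : ℝ) * ∑ j, δ j with hΔdef
  have hΔ0 : 0 ≤ Δ := by
    have : (0:ℝ) ≤ ∑ j, δ j := Finset.sum_nonneg (fun j _ => hδ0 j)
    positivity
  -- main: ∀ c > 0, LHS ≤ RHS + c
  have main : ∀ c : ℝ, 0 < c →
      sInf ((fun x => ‖xavg - x‖) '' Xstar) ≤ (((2 / m : ℝ) * ∑ j, δ j) / ε) * DX + c := by
    intro c hc
    set η : ℝ := min (ε/2) (c * ε / (DX + 1)) with hηdef
    have hη0 : 0 < η := lt_min (by positivity) (by positivity)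
    have hηε : η < ε := (min_le_left _ _).trans_lt (by linarith)
    -- near-optimal point
    obtain ⟨-, ⟨xη, hxηX, rfl⟩, hxηlt⟩ :=
      Real.lt_sInf_add_pos (hXne.image f) hη0
    rw [← hθstar] at hxηlt
    have hθle : ∀ x ∈ X, θstar ≤ f x := by
      intro x hx
      rw [hθstar]
      refine csInf_le ⟨-MF, ?_⟩ ⟨x, hx, rfl⟩
      rintro _ ⟨y, hy, rfl⟩
      exact neg_le_of_abs_le (hfb y hy)
    -- bound on f (xsel j)
    have hsel : ∀ j : Fin m, f (xsel j) ≤ θstar + η + ε + 2 * δ j := by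
      intro j
      have h1 : f (xsel j) ≤ fn j (xsel j) + δ j := by
        have := hδle j (xsel j) (hxsel j).1
        have := abs_le.mp this
        linarith [this.1]
      have h2 : sInf (fn j '' X) ≤ fn j xη := by
        refine csInf_le ⟨-MF, ?_⟩ ⟨xη, hxηX, rfl⟩
        rintro _ ⟨y, hy, rfl⟩
        exact neg_le_of_abs_le (hfnb j y hy)
      have h3 : fn j xη ≤ f xη + δ j := by
        have := abs_le.mp (hδle j xη hxηX)
        linarith [this.2]
      have := (hxsel j).2
      linarith
    -- bound on f xavg
    have hfavg : f xavg ≤ θstar + η + ε + 2 * Δ := by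
      refine hjensen.trans ?_
      have hsum : ∑ j : Fin m, (1/m : ℝ) * f (xsel j)
          ≤ ∑ j : Fin m, (1/m : ℝ) * (θstar + η + ε + 2 * δ j) :=
        Finset.sum_le_sum (fun j _ =>
          mul_le_mul_of_nonneg_left (hsel j) (by positivity))
      refine hsum.trans (le_of_eq ?_)
      have : ∑ j : Fin m, (1/m : ℝ) * (θstar + η + ε + 2 * δ j)
          = (∑ _j : Fin m, (1/m:ℝ)) * (θstar + η + ε) + (1/m:ℝ) * (2 * ∑ j, δ j) := by
        simp only [Finset.sum_mul, Finset.mul_sum]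
        rw [← Finset.sum_add_distrib]
        exact Finset.sum_congr rfl fun j _ => by ring
      rw [this, hwsum, hΔdef]; ring
    -- the interpolated point
    set t : ℝ := (2 * Δ + η) / (ε + 2 * Δ) with htdef
    have hden : 0 < ε + 2 * Δ := by linarith
    have ht0 : 0 ≤ t := by positivity
    have ht1 : t ≤ 1 := by
      rw [htdef, div_le_one hden]; linarith
    set y : EuclideanSpace ℝ (Fin p) := t • xη + (1 - t) • xavg with hydef
    have hyX : y ∈ X := hXconv hxηX hxavgX ht0 (by linarith) (by ring)
    have hfy : f y ≤ θstar + ε := by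
      have := hfconv.2 hxηX hxavgX ht0 (by linarith : (0:ℝ) ≤ 1 - t) (by ring : t + (1-t) = 1)
      simp only [smul_eq_mul] at this
      have h1 : t * f xη ≤ t * (θstar + η) :=
        mul_le_mul_of_nonneg_left (le_of_lt hxηlt) ht0
      have h2 : (1 - t) * f xavg ≤ (1 - t) * (θstar + η + ε + 2 * Δ) :=
        mul_le_mul_of_nonneg_left hfavg (by linarith)
      have hteq : t * (ε + 2 * Δ) = 2 * Δ + η := by
        rw [htdef]; field_simp
      have hcomb : t * (θstar + η) + (1 - t) * (θstar + η + ε + 2 * Δ) = θstar + ε := by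
        linear_combination -hteq
      linarith [this, h1, h2, hcomb]
    have hyXstar : y ∈ Xstar := by rw [hXstar]; exact ⟨hyX, hfy⟩
    -- distance bound
    have hdist : ‖xavg - y‖ = t * ‖xavg - xη‖ := by
      have : xavg - y = t • (xavg - xη) := by
        rw [hydef]; module
      rw [this, norm_smul, Real.norm_eq_abs, abs_of_nonneg ht0]
    have hle1 : sInf ((fun x => ‖xavg - x‖) '' Xstar) ≤ ‖xavg - y‖ := by
      refine csInf_le ⟨0, ?_⟩ ⟨y, hyXstar, rfl⟩
      rintro _ ⟨z, hz, rfl⟩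
      exact norm_nonneg _
    have hle2 : ‖xavg - y‖ ≤ t * DX := by
      rw [hdist]
      exact mul_le_mul_of_nonneg_left (hDXle xavg hxavgX xη hxηX) ht0
    have hle3 : t * DX ≤ ((2 * Δ + η) / ε) * DX := by
      refine mul_le_mul_of_nonneg_right ?_ hDX0
      rw [htdef]
      exact div_le_div_of_nonneg_left (by linarith) hε (by linarith)
    have hηDX : (η / ε) * DX ≤ c := by
      have hη2 : η ≤ c * ε / (DX + 1) := min_le_right _ _
      have h1 : η * (DX + 1) ≤ c * ε :=
        (le_div_iff₀ (by linarith : (0:ℝ) < DX + 1)).mp hη2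
      have hexp : η * (DX + 1) = η * DX + η := by ring
      have h2 : η * DX ≤ c * ε := by linarith
      rw [div_mul_eq_mul_div, div_le_iff₀ hε]
      exact h2
    have hsplit : ((2 * Δ + η) / ε) * DX
        = (((2 / m : ℝ) * ∑ j, δ j) / ε) * DX + (η / ε) * DX := by
      have : (2:ℝ) * Δ = (2 / m) * ∑ j, δ j := by rw [hΔdef]; ring
      rw [← this]; ring
    calc sInf ((fun x => ‖xavg - x‖) '' Xstar) ≤ t * DX := hle1.trans hle2
      _ ≤ ((2 * Δ + η) / ε) * DX := hle3
      _ = (((2 / m : ℝ) * ∑ j, δ j) / ε) * DX + (η / ε) * DX := hsplit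
      _ ≤ (((2 / m : ℝ) * ∑ j, δ j) / ε) * DX + c := by linarith
  exact le_of_forall_pos_le_add main

end
end

section
/- Under the standing assumptions on X and F, convexity of F(·,ξ), i.i.d. sampling across replications, and the outer-approximation and termination conditions of the cutting-plane algorithm with tolerance ε₁, suppose ε ≤ ε₁ and set τ₁ = ε₁ − ε. Then inf_{x ∈ X*_ε} ‖(1/m) Σ_{j=1}^m x̂_n(ξ^n_j) − x‖ ≤ ( ( τ₁ + (2/m) Σ_{j=1}^m δ_n^f(ξ^n_j) ) / ε )·D_X. -/
open MeasureTheory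
open scoped RealInnerProductSpace Topology

/-!
The true objective `f` is convex and continuous on the compact set `X`, so it attains `θ*` at
some `x*`. For each replication, the outer approximation, the choice of `x̂ⱼ` and the
termination test give `f(x̂ⱼ) ≤ θ* + ε₁ + 2δⱼ`, and Jensen's inequality passes this to the
average: `f(x̄) ≤ θ* + ε + t` with `t = τ₁ + (2/m) Σⱼ δⱼ`. Moving from `x̄` towards `x*` by the
fraction `t / (ε + t)` of the segment then lands, by convexity, in `X*_ε`, at distance at most
`(t / ε) ‖x̄ - x*‖ ≤ (t / ε) D_X` from `x̄`.
-/

theorem ConvexOn.exists_mem_le_add_and_norm_sub_le {E : Type*} [SeminormedAddCommGroup E]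
    [NormedSpace ℝ E] {s : Set E} {f : E → ℝ} (hf : ConvexOn ℝ s f) {x₀ x : E}
    (hx₀ : x₀ ∈ s) (hx : x ∈ s) {ε t : ℝ} (hε : 0 < ε) (ht : 0 ≤ t)
    (hfx : f x ≤ f x₀ + ε + t) :
    ∃ y ∈ s, f y ≤ f x₀ + ε ∧ ‖x - y‖ ≤ t / ε * ‖x - x₀‖ := by
  have hεt : 0 < ε + t := by linarith
  set a := ε / (ε + t) with ha
  have ha₀ : 0 ≤ a := by positivity
  have ha₁ : 1 - a = t / (ε + t) := by rw [ha]; field_simp; ring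
  have hb₀ : 0 ≤ 1 - a := ha₁ ▸ by positivity
  refine ⟨a • x + (1 - a) • x₀, hf.1 hx hx₀ ha₀ hb₀ (by ring), ?_, ?_⟩
  · have hconv := hf.2 hx hx₀ ha₀ hb₀ (by ring)
    have hscale : a * (ε + t) = ε := by rw [ha]; field_simp
    simp only [smul_eq_mul] at hconv
    linarith [mul_le_mul_of_nonneg_left hfx ha₀]
  · have hdiff : x - (a • x + (1 - a) • x₀) = (1 - a) • (x - x₀) := by module
    rw [hdiff, norm_smul, Real.norm_of_nonneg hb₀, ha₁]
    gcongr
    linarith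

theorem IsMinOn.le_add_of_minorant_gap_le {α : Type*} {s : Set α} {fhat fn f : α → ℝ}
    {a x : α} {ε₁ δ : ℝ} (ha : a ∈ s) (hmin : IsMinOn fhat s a) (hle : ∀ y ∈ s, fhat y ≤ fn y)
    (hgap : fn a - fhat a ≤ ε₁) (hδ : ∀ y ∈ s, |fn y - f y| ≤ δ) (hx : x ∈ s) :
    f a ≤ f x + ε₁ + 2 * δ := by
  have h₁ := (abs_le.1 (hδ a ha)).1
  have h₂ := (abs_le.1 (hδ x hx)).2
  linarith [isMinOn_iff.1 hmin x hx, hle x hx]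

theorem Convex.inv_natCast_smul_sum_mem {E : Type*} [AddCommGroup E] [Module ℝ E] {s : Set E}
    (hs : Convex ℝ s) {m : ℕ} (hm : 0 < m) {x : Fin m → E} (hx : ∀ j, x j ∈ s) :
    (m : ℝ)⁻¹ • ∑ j, x j ∈ s := by
  rw [Finset.smul_sum]
  exact hs.sum_mem (fun _ _ => by positivity) (by simp [hm.ne']) fun j _ => hx j

theorem ConvexOn.map_average_le_add {E : Type*} [AddCommGroup E] [Module ℝ E] {s : Set E}
    {f : E → ℝ} (hf : ConvexOn ℝ s f) {m : ℕ} (hm : 0 < m) {x : Fin m → E}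
    (hx : ∀ j, x j ∈ s) {c : ℝ} {b : Fin m → ℝ} (hb : ∀ j, f (x j) ≤ c + b j) :
    f ((m : ℝ)⁻¹ • ∑ j, x j) ≤ c + (m : ℝ)⁻¹ * ∑ j, b j := by
  have hm' : (m : ℝ) ≠ 0 := by positivity
  have hw : ∑ _j : Fin m, (m : ℝ)⁻¹ = 1 := by simp [hm']
  calc f ((m : ℝ)⁻¹ • ∑ j, x j)
      ≤ ∑ j, (m : ℝ)⁻¹ • f (x j) := by
        rw [Finset.smul_sum]
        exact hf.map_sum_le (fun _ _ => by positivity) hw fun j _ => hx j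
    _ ≤ ∑ j, (m : ℝ)⁻¹ * (c + b j) :=
        Finset.sum_le_sum fun j _ => mul_le_mul_of_nonneg_left (hb j) (by positivity)
    _ = c + (m : ℝ)⁻¹ * ∑ j, b j := by
        simp only [mul_add, Finset.sum_add_distrib, ← Finset.mul_sum, Finset.sum_const,
          Finset.card_univ, Fintype.card_fin, nsmul_eq_mul]
        field_simp

theorem convexOn_integral_of_ae_convexOn {E α : Type*} [AddCommGroup E] [Module ℝ E]
    [MeasurableSpace α] {μ : Measure α} {s : Set E} {F : E → α → ℝ} (hs : Convex ℝ s)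
    (hint : ∀ x ∈ s, Integrable (F x) μ) (hF : ∀ᵐ z ∂μ, ConvexOn ℝ s fun x => F x z) :
    ConvexOn ℝ s fun x => ∫ z, F x z ∂μ := by
  refine ⟨hs, fun x hx y hy a b ha hb hab => ?_⟩
  have hax := (hint x hx).const_mul a
  have hby := (hint y hy).const_mul b
  calc ∫ z, F (a • x + b • y) z ∂μ
      ≤ ∫ z, (a * F x z + b * F y z) ∂μ := by
        refine integral_mono_ae (hint _ (hs hx hy ha hb hab)) (hax.add hby) ?_
        filter_upwards [hF] with z hz
        exact hz.2 hx hy ha hb hab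
    _ = a • ∫ z, F x z ∂μ + b • ∫ z, F y z ∂μ := by
        rw [integral_add hax hby, integral_const_mul, integral_const_mul, smul_eq_mul,
          smul_eq_mul]

theorem abs_integral_sub_integral_le {α : Type*} [MeasurableSpace α] {μ : Measure α}
    [IsProbabilityMeasure μ] {g h : α → ℝ} (hg : Integrable g μ) (hh : Integrable h μ) {c : ℝ}
    (hc : ∀ᵐ z ∂μ, |g z - h z| ≤ c) : |∫ z, g z ∂μ - ∫ z, h z ∂μ| ≤ c := by
  rw [← integral_sub hg hh, ← Real.norm_eq_abs]
  simpa using norm_integral_le_of_norm_le_const (μ := μ) (f := fun z => g z - h z) hc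

theorem continuousOn_of_abs_sub_le_mul_rpow {E : Type*} [SeminormedAddCommGroup E] {s : Set E}
    {g : E → ℝ} {C γ : ℝ} (hγ : 0 < γ)
    (h : ∀ x ∈ s, ∀ y ∈ s, |g x - g y| ≤ C * ‖x - y‖ ^ γ) : ContinuousOn g s := by
  intro x₀ hx₀
  have hbound : Filter.Tendsto (fun x => C * ‖x - x₀‖ ^ γ) (𝓝 x₀) (𝓝 0) := by
    have hcont : Continuous fun x : E => C * ‖x - x₀‖ ^ γ :=
      continuous_const.mul ((continuous_id.sub continuous_const).norm.rpow_const
        fun _ => Or.inr hγ.le)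
    simpa [Real.zero_rpow hγ.ne'] using hcont.tendsto x₀
  rw [ContinuousWithinAt, tendsto_iff_norm_sub_tendsto_zero]
  refine squeeze_zero' (Filter.Eventually.of_forall fun _ => norm_nonneg _) ?_
    (hbound.mono_left nhdsWithin_le_nhds)
  filter_upwards [self_mem_nhdsWithin] with x hx
  exact h x hx x₀ hx₀

theorem norm_sub_le_sSup_image2_of_isCompact {E : Type*} [SeminormedAddCommGroup E] {s : Set E}
    (hs : IsCompact s) {x y : E} (hx : x ∈ s) (hy : y ∈ s) :
    ‖x - y‖ ≤ sSup (Set.image2 (fun x x' => ‖x - x'‖) s s) := by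
  refine le_csSup ⟨Metric.diam s, ?_⟩ (Set.mem_image2_of_mem hx hy)
  rintro _ ⟨a, ha, b, hb, rfl⟩
  exact (dist_eq_norm a b).symm.trans_le (Metric.dist_le_diam_of_mem hs.isBounded ha hb)

theorem cutting_plane_average_distance_to_true_eps_optimal_set_general
    {p d m n : ℕ} (hm : 1 ≤ m)
    (X : Set (EuclideanSpace ℝ (Fin p))) (Ξ : Set (EuclideanSpace ℝ (Fin d)))
    (hXne : X.Nonempty) (hXcomp : IsCompact X) (hXconv : Convex ℝ X)
    (F : EuclideanSpace ℝ (Fin p) → EuclideanSpace ℝ (Fin d) → ℝ)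
    (hFcont : ∀ ζ ∈ Ξ, ContinuousOn (fun x => F x ζ) X)
    (hFmeas : ∀ x ∈ X, Measurable (F x))
    (LF γ : ℝ) (hγ : 0 < γ)
    (hHolder : ∀ x ∈ X, ∀ y ∈ X, ∀ ζ ∈ Ξ, |F x ζ - F y ζ| ≤ LF * ‖x - y‖ ^ γ)
    (MF : ℝ) (hMF : ∀ x ∈ X, ∀ ζ ∈ Ξ, |F x ζ| < MF)
    (hFconvex : ∀ ζ ∈ Ξ, ConvexOn ℝ X fun x => F x ζ)
    -- the distribution `μ` of `ξ̃` on `Ξ`, the true objective `f`, and `θ*`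
    (μ : Measure (EuclideanSpace ℝ (Fin d))) [IsProbabilityMeasure μ]
    (hμΞ : ∀ᵐ z ∂μ, z ∈ Ξ)
    (f : EuclideanSpace ℝ (Fin p) → ℝ) (hf : ∀ x, f x = ∫ z, F x z ∂μ)
    (θstar : ℝ) (hθstar : θstar = sInf (f '' X))
    -- the samples and SAA objectives of the `m` replications
    (ξ : Fin m → Fin n → EuclideanSpace ℝ (Fin d)) (hξΞ : ∀ i j, ξ i j ∈ Ξ)
    (fn : Fin m → EuclideanSpace ℝ (Fin p) → ℝ)
    (hfn : ∀ i x, fn i x = (1 / n : ℝ) * ∑ j, F x (ξ i j))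
    (δ : Fin m → ℝ) (hδ : ∀ i, δ i = sSup ((fun x => |fn i x - f x|) '' X))
    -- Condition 1 (outer approximation): each `f̂ₙ(·;ξⁿᵢ)` is a convex
    -- piecewise-linear function minorizing `fₙ(·;ξⁿᵢ)` on `X`
    (fhat : Fin m → EuclideanSpace ℝ (Fin p) → ℝ)
    (houter : ∀ i, ∀ x ∈ X, fhat i x ≤ fn i x)
    -- minimizers of the approximations, and Condition 2 (termination)
    (xhat : Fin m → EuclideanSpace ℝ (Fin p))
    (hxhat : ∀ i, xhat i ∈ X ∧ IsMinOn (fhat i) X (xhat i))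
    (ε₁ : ℝ)
    (hterm : ∀ i, fn i (xhat i) - fhat i (xhat i) ≤ ε₁)
    (ε : ℝ) (hε : 0 < ε) (hεε₁ : ε ≤ ε₁)
    (τ₁ : ℝ) (hτ₁ : τ₁ = ε₁ - ε)
    -- the average of the candidate solutions
    (xavg : EuclideanSpace ℝ (Fin p)) (hxavg : xavg = (m : ℝ)⁻¹ • ∑ j, xhat j)
    -- the ε-optimal set of the true problem
    (Xstar : Set (EuclideanSpace ℝ (Fin p)))
    (hXstar : Xstar = {x ∈ X | f x ≤ θstar + ε})
    (DX : ℝ) (hDX : DX = sSup (Set.image2 (fun x x' => ‖x - x'‖) X X)) :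
    sInf ((fun x => ‖xavg - x‖) '' Xstar) ≤
      ((τ₁ + (2 / m : ℝ) * ∑ j, δ j) / ε) * DX := by
  have hint : ∀ x ∈ X, Integrable (F x) μ := fun x hx =>
    Integrable.of_bound (hFmeas x hx).aestronglyMeasurable MF
      (by filter_upwards [hμΞ] with z hz using (hMF x hx z hz).le)
  have hfconv : ConvexOn ℝ X f := funext hf ▸ convexOn_integral_of_ae_convexOn hXconv hint
    (by filter_upwards [hμΞ] with z hz using hFconvex z hz)
  have hfcont : ContinuousOn f X := continuousOn_of_abs_sub_le_mul_rpow hγ fun x hx y hy => by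
    rw [hf, hf]
    exact abs_integral_sub_integral_le (hint x hx) (hint y hy)
      (by filter_upwards [hμΞ] with z hz using hHolder x hx y hy z hz)
  obtain ⟨xs, hxsX, hxsmin⟩ := hXcomp.exists_isMinOn hXne hfcont
  have hθ : θstar = f xs :=
    hθstar ▸ IsLeast.csInf_eq ⟨Set.mem_image_of_mem f hxsX, Set.forall_mem_image.2 hxsmin⟩
  have hδle : ∀ i, ∀ x ∈ X, |fn i x - f x| ≤ δ i := by
    intro i x hx
    have hfncont : ContinuousOn (fn i) X := funext (hfn i) ▸
      continuousOn_const.mul (continuousOn_finsetSum _ fun j _ => hFcont _ (hξΞ i j))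
    exact hδ i ▸ le_csSup (hXcomp.bddAbove_image (hfncont.sub hfcont).abs) ⟨x, hx, rfl⟩
  have havgX : xavg ∈ X := hxavg ▸ hXconv.inv_natCast_smul_sum_mem hm fun j => (hxhat j).1
  have hrep : ∀ j, f (xhat j) ≤ f xs + ε₁ + 2 * δ j := fun j =>
    (hxhat j).2.le_add_of_minorant_gap_le (hxhat j).1 (houter j) (hterm j) (hδle j) hxsX
  set t := τ₁ + (2 / m : ℝ) * ∑ j, δ j with ht_def
  have ht : 0 ≤ t := add_nonneg (by linarith) <| mul_nonneg (by positivity) <|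
    Finset.sum_nonneg fun j _ => (abs_nonneg _).trans (hδle j xs hxsX)
  have hfavg : f xavg ≤ f xs + ε + t := by
    have := hfconv.map_average_le_add hm (fun j => (hxhat j).1) hrep
    rw [hxavg]
    convert this using 1
    rw [ht_def, hτ₁, ← Finset.mul_sum]
    ring
  obtain ⟨y, hyX, hfy, hdist⟩ :=
    hfconv.exists_mem_le_add_and_norm_sub_le hxsX havgX hε ht hfavg
  calc sInf ((fun x => ‖xavg - x‖) '' Xstar)
      ≤ ‖xavg - y‖ :=
        csInf_le ⟨0, by rintro _ ⟨x, -, rfl⟩; exact norm_nonneg _⟩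
          ⟨y, hXstar ▸ ⟨hyX, hθ ▸ hfy⟩, rfl⟩
    _ ≤ t / ε * ‖xavg - xs‖ := hdist
    _ ≤ t / ε * DX := by
        gcongr
        exact hDX ▸ norm_sub_le_sSup_image2_of_isCompact hXcomp havgX hxsX

/-- Lemma 4.1: under the outer-approximation and termination conditions of a
cutting-plane-type algorithm with tolerance `ε₁ ≥ ε`, the distance of the
average of the candidate solutions to the ε-optimal set of the true problem is
bounded by `((τ₁ + (2/m) Σⱼ δₙᶠ(ξⁿⱼ)) / ε) · D_X`, where `τ₁ = ε₁ − ε`. -/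
theorem cutting_plane_average_distance_to_true_eps_optimal_set
    {p d m n : ℕ} (hm : 1 ≤ m) (hn : 1 ≤ n)
    (X : Set (EuclideanSpace ℝ (Fin p))) (Ξ : Set (EuclideanSpace ℝ (Fin d)))
    (hXne : X.Nonempty) (hXcomp : IsCompact X) (hXconv : Convex ℝ X)
    (F : EuclideanSpace ℝ (Fin p) → EuclideanSpace ℝ (Fin d) → ℝ)
    (hFcont : ∀ ζ ∈ Ξ, ContinuousOn (fun x => F x ζ) X)
    (hFmeas : ∀ x ∈ X, Measurable (F x))
    (LF γ : ℝ) (hLF : 0 < LF) (hγ : 0 < γ) (hγ1 : γ ≤ 1)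
    (hHolder : ∀ x ∈ X, ∀ y ∈ X, ∀ ζ ∈ Ξ, |F x ζ - F y ζ| ≤ LF * ‖x - y‖ ^ γ)
    (MF : ℝ) (hMF : ∀ x ∈ X, ∀ ζ ∈ Ξ, |F x ζ| < MF)
    (hFconvex : ∀ ζ ∈ Ξ, ConvexOn ℝ X fun x => F x ζ)
    -- the distribution `μ` of `ξ̃` on `Ξ`, the true objective `f`, and `θ*`
    (μ : Measure (EuclideanSpace ℝ (Fin d))) [IsProbabilityMeasure μ]
    (hμΞ : ∀ᵐ z ∂μ, z ∈ Ξ)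
    (f : EuclideanSpace ℝ (Fin p) → ℝ) (hf : ∀ x, f x = ∫ z, F x z ∂μ)
    (θstar : ℝ) (hθstar : θstar = sInf (f '' X))
    -- the samples and SAA objectives of the `m` replications
    (ξ : Fin m → Fin n → EuclideanSpace ℝ (Fin d)) (hξΞ : ∀ i j, ξ i j ∈ Ξ)
    (fn : Fin m → EuclideanSpace ℝ (Fin p) → ℝ)
    (hfn : ∀ i x, fn i x = (1 / n : ℝ) * ∑ j, F x (ξ i j))
    (δ : Fin m → ℝ) (hδ : ∀ i, δ i = sSup ((fun x => |fn i x - f x|) '' X))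
    -- Condition 1 (outer approximation): each `f̂ₙ(·;ξⁿᵢ)` is a convex
    -- piecewise-linear function minorizing `fₙ(·;ξⁿᵢ)` on `X`
    (fhat : Fin m → EuclideanSpace ℝ (Fin p) → ℝ)
    (k : Fin m → ℕ) (hk : ∀ i, 1 ≤ k i)
    (α : (i : Fin m) → Fin (k i) → ℝ)
    (β : (i : Fin m) → Fin (k i) → EuclideanSpace ℝ (Fin p))
    (hPL : ∀ i x, fhat i x = ⨆ ℓ : Fin (k i), (α i ℓ + ⟪β i ℓ, x⟫))
    (houter : ∀ i, ∀ x ∈ X, fhat i x ≤ fn i x)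
    -- minimizers of the approximations, and Condition 2 (termination)
    (xhat : Fin m → EuclideanSpace ℝ (Fin p))
    (hxhat : ∀ i, xhat i ∈ X ∧ IsMinOn (fhat i) X (xhat i))
    (ε₁ : ℝ) (hε₁ : 0 < ε₁)
    (hterm : ∀ i, fn i (xhat i) - fhat i (xhat i) ≤ ε₁)
    (ε : ℝ) (hε : 0 < ε) (hεε₁ : ε ≤ ε₁)
    (τ₁ : ℝ) (hτ₁ : τ₁ = ε₁ - ε)
    -- the average of the candidate solutions
    (xavg : EuclideanSpace ℝ (Fin p)) (hxavg : xavg = (m : ℝ)⁻¹ • ∑ j, xhat j)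
    -- the ε-optimal set of the true problem
    (Xstar : Set (EuclideanSpace ℝ (Fin p)))
    (hXstar : Xstar = {x ∈ X | f x ≤ θstar + ε})
    (DX : ℝ) (hDX : DX = sSup (Set.image2 (fun x x' => ‖x - x'‖) X X)) :
    sInf ((fun x => ‖xavg - x‖) '' Xstar) ≤
      ((τ₁ + (2 / m : ℝ) * ∑ j, δ j) / ε) * DX :=
  cutting_plane_average_distance_to_true_eps_optimal_set_general hm X Ξ hXne hXcomp hXconv F hFcont
    hFmeas LF γ hγ hHolder MF hMF hFconvex μ hμΞ f hf θstar hθstar ξ hξΞ fn hfn δ hδ fhat houter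
    xhat hxhat ε₁ hterm ε hε hεε₁ τ₁ hτ₁ xavg hxavg Xstar hXstar DX hDX
end

section
/- Under the standing assumptions on X and F, convexity of F(·,ξ), i.i.d. sampling across replications, and the outer-approximation and termination conditions of the cutting-plane algorithm with tolerances ε₁ and ε₂, suppose ε ≤ ε₁ + ((m−1)/m)·ε₂ and set τ₂ = ε₁ + ((m−1)/m)·ε₂ − ε. Then inf_{x ∈ X̂_{N,ε}(ξ^N)} ‖(1/m) Σ_{j=1}^m x̂_n(ξ^n_j) − x‖ ≤ ( ( τ₂ + (1/m²) Σ_{i≠j} ( δ_n^f(ξ^n_i) + δ_n^f(ξ^n_j) ) ) / ε )·D_X, where the sum runs over ordered pairs i,j ∈ {1,…,m} with i ≠ j. -/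
open MeasureTheory
open scoped RealInnerProductSpace

noncomputable section

private lemma aux_affine_convexOn {p : ℕ} {X : Set (EuclideanSpace ℝ (Fin p))}
    (hX : Convex ℝ X) (c : ℝ) (v : EuclideanSpace ℝ (Fin p)) :
    ConvexOn ℝ X (fun x => c + ⟪v, x⟫) := by
  refine ⟨hX, fun x hx y hy a b ha hb hab => ?_⟩
  simp only [smul_eq_mul]
  rw [inner_add_right, real_inner_smul_right, real_inner_smul_right]
  apply le_of_eq
  linear_combination (-c) * hab

private lemma aux_iSup_convexOn {p K : ℕ} (hK : 0 < K) {X : Set (EuclideanSpace ℝ (Fin p))}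
    (g : Fin K → EuclideanSpace ℝ (Fin p) → ℝ) (hX : Convex ℝ X)
    (hg : ∀ ℓ, ConvexOn ℝ X (g ℓ)) :
    ConvexOn ℝ X (fun x => ⨆ ℓ, g ℓ x) := by
  haveI : Nonempty (Fin K) := ⟨⟨0, hK⟩⟩
  refine ⟨hX, fun x hx y hy a b ha hb hab => ?_⟩
  simp only [smul_eq_mul]
  refine ciSup_le fun ℓ => ?_
  have h1 := (hg ℓ).2 hx hy ha hb hab
  simp only [smul_eq_mul] at h1
  refine h1.trans ?_
  have hx' : g ℓ x ≤ ⨆ ℓ', g ℓ' x :=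
    le_ciSup (f := fun ℓ' => g ℓ' x) (Set.finite_range _).bddAbove ℓ
  have hy' : g ℓ y ≤ ⨆ ℓ', g ℓ' y :=
    le_ciSup (f := fun ℓ' => g ℓ' y) (Set.finite_range _).bddAbove ℓ
  have := mul_le_mul_of_nonneg_left hx' ha
  have := mul_le_mul_of_nonneg_left hy' hb
  linarith

/-- Lemma 4.2: under the outer-approximation and termination conditions of a
cutting-plane-type algorithm with tolerances `ε₁, ε₂` and
`ε ≤ ε₁ + ((m−1)/m) ε₂`, the distance of the average of the candidate solutions
to the ε-optimal set of the (augmented) aggregated problem is bounded by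
`((τ₂ + (1/m²) Σ_{i≠j}(δₙᶠ(ξⁿᵢ) + δₙᶠ(ξⁿⱼ))) / ε) · D_X`,
where `τ₂ = ε₁ + ((m−1)/m) ε₂ − ε`. -/
theorem cutting_plane_average_distance_to_augmented_eps_optimal_set
    {p d m n : ℕ} (hm : 1 ≤ m) (hn : 1 ≤ n)
    (X : Set (EuclideanSpace ℝ (Fin p))) (Ξ : Set (EuclideanSpace ℝ (Fin d)))
    (hXne : X.Nonempty) (hXcomp : IsCompact X) (hXconv : Convex ℝ X)
    (F : EuclideanSpace ℝ (Fin p) → EuclideanSpace ℝ (Fin d) → ℝ)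
    (hFcont : ∀ ζ ∈ Ξ, ContinuousOn (fun x => F x ζ) X)
    (hFmeas : ∀ x ∈ X, Measurable (F x))
    (LF γ : ℝ) (hLF : 0 < LF) (hγ : 0 < γ) (hγ1 : γ ≤ 1)
    (hHolder : ∀ x ∈ X, ∀ y ∈ X, ∀ ζ ∈ Ξ, |F x ζ - F y ζ| ≤ LF * ‖x - y‖ ^ γ)
    (MF : ℝ) (hMF : ∀ x ∈ X, ∀ ζ ∈ Ξ, |F x ζ| < MF)
    (hFconvex : ∀ ζ ∈ Ξ, ConvexOn ℝ X fun x => F x ζ)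
    -- the distribution `μ` of `ξ̃` on `Ξ`, the true objective `f`, and `θ*`
    (μ : Measure (EuclideanSpace ℝ (Fin d))) [IsProbabilityMeasure μ]
    (hμΞ : ∀ᵐ z ∂μ, z ∈ Ξ)
    (f : EuclideanSpace ℝ (Fin p) → ℝ) (hf : ∀ x, f x = ∫ z, F x z ∂μ)
    (θstar : ℝ) (hθstar : θstar = sInf (f '' X))
    -- the samples and SAA objectives of the `m` replications
    (ξ : Fin m → Fin n → EuclideanSpace ℝ (Fin d)) (hξΞ : ∀ i j, ξ i j ∈ Ξ)
    (fn : Fin m → EuclideanSpace ℝ (Fin p) → ℝ)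
    (hfn : ∀ i x, fn i x = (1 / n : ℝ) * ∑ j, F x (ξ i j))
    (δ : Fin m → ℝ) (hδ : ∀ i, δ i = sSup ((fun x => |fn i x - f x|) '' X))
    -- Condition 1 (outer approximation): each `f̂ₙ(·;ξⁿᵢ)` is a convex
    -- piecewise-linear function minorizing `fₙ(·;ξⁿᵢ)` on `X`
    (fhat : Fin m → EuclideanSpace ℝ (Fin p) → ℝ)
    (k : Fin m → ℕ) (hk : ∀ i, 1 ≤ k i)
    (α : (i : Fin m) → Fin (k i) → ℝ)
    (β : (i : Fin m) → Fin (k i) → EuclideanSpace ℝ (Fin p))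
    (hPL : ∀ i x, fhat i x = ⨆ ℓ : Fin (k i), (α i ℓ + ⟪β i ℓ, x⟫))
    (houter : ∀ i, ∀ x ∈ X, fhat i x ≤ fn i x)
    -- minimizers of the approximations, and Condition 2 (termination)
    (xhat : Fin m → EuclideanSpace ℝ (Fin p))
    (hxhat : ∀ i, xhat i ∈ X ∧ IsMinOn (fhat i) X (xhat i))
    (ε₁ : ℝ) (hε₁ : 0 < ε₁)
    (hterm : ∀ i, fn i (xhat i) - fhat i (xhat i) ≤ ε₁)
    -- `ε₂`-subgradients `υ_{n,ε₂}(x̂ₙ(ξⁿⱼ); ξⁿᵢ)` of `fₙ(·;ξⁿᵢ)` at `x̂ₙ(ξⁿⱼ)`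
    (ε₂ : ℝ) (hε₂ : 0 ≤ ε₂)
    (υ : Fin m → Fin m → EuclideanSpace ℝ (Fin p))
    (hυ : ∀ i j, ∀ x ∈ X, fn i (xhat j) + ⟪υ i j, x - xhat j⟫ - ε₂ ≤ fn i x)
    -- the augmented piecewise-linear approximations `f̌ₙ(·;ξⁿᵢ)`
    (fcheck : Fin m → EuclideanSpace ℝ (Fin p) → ℝ)
    (hfcheck : ∀ i x, fcheck i x =
      max (fhat i x) (⨆ j : Fin m, (fn i (xhat j) + ⟪υ i j, x - xhat j⟫ - ε₂)))
    (ε : ℝ) (hε : 0 < ε) (hεε : ε ≤ ε₁ + ((m - 1 : ℝ) / m) * ε₂)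
    (τ₂ : ℝ) (hτ₂ : τ₂ = ε₁ + ((m - 1 : ℝ) / m) * ε₂ - ε)
    -- the average of the candidate solutions
    (xavg : EuclideanSpace ℝ (Fin p)) (hxavg : xavg = (m : ℝ)⁻¹ • ∑ j, xhat j)
    -- the ε-optimal set of the aggregated augmented problem
    (XhatN : Set (EuclideanSpace ℝ (Fin p)))
    (hXhatN : XhatN = {x ∈ X | (1 / m : ℝ) * ∑ i, fcheck i x ≤
      sInf ((fun y => (1 / m : ℝ) * ∑ i, fcheck i y) '' X) + ε})
    (DX : ℝ) (hDX : DX = sSup (Set.image2 (fun x x' => ‖x - x'‖) X X)) :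
    sInf ((fun x => ‖xavg - x‖) '' XhatN) ≤
      ((τ₂ + (1 / m ^ 2 : ℝ) *
          ∑ q ∈ Finset.univ.filter (fun q : Fin m × Fin m => q.1 ≠ q.2),
            (δ q.1 + δ q.2)) / ε) * DX := by
  haveI : Nonempty (Fin m) := ⟨⟨0, hm⟩⟩
  have hm0 : (0:ℝ) < m := by exact_mod_cast hm
  have hmne : (m:ℝ) ≠ 0 := ne_of_gt hm0
  have hn0 : (0:ℝ) < n := by exact_mod_cast hn
  obtain ⟨x0, hx0⟩ := hXne
  have hxhatX : ∀ i, xhat i ∈ X := fun i => (hxhat i).1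
  -- bounds on |fn i x| and |f x|
  have hfnb : ∀ i, ∀ x ∈ X, |fn i x| ≤ MF := by
    intro i x hx
    rw [hfn]
    calc |(1/n:ℝ) * ∑ j, F x (ξ i j)| = (1/n:ℝ) * |∑ j, F x (ξ i j)| := by
          rw [abs_mul, abs_of_nonneg (by positivity : (0:ℝ) ≤ (1/n:ℝ))]
      _ ≤ (1/n:ℝ) * ∑ j, |F x (ξ i j)| := by
          gcongr
          exact Finset.abs_sum_le_sum_abs _ _
      _ ≤ (1/n:ℝ) * ∑ _j : Fin n, MF := by
          gcongr with j
          exact le_of_lt (hMF x hx _ (hξΞ _ _))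
      _ = MF := by
          rw [Finset.sum_const, Finset.card_univ, Fintype.card_fin, nsmul_eq_mul]
          field_simp
  have hfb : ∀ x ∈ X, |f x| ≤ MF := by
    intro x hx
    rw [hf]
    have h := norm_integral_le_of_norm_le_const (μ := μ) (f := F x) (C := MF)
      (by filter_upwards [hμΞ] with z hz
          exact le_of_lt (by simpa [Real.norm_eq_abs] using hMF x hx z hz))
    simpa [Real.norm_eq_abs, measure_univ] using h
  -- properties of δ
  have hδbdd : ∀ i, BddAbove ((fun x => |fn i x - f x|) '' X) := by
    intro i
    refine ⟨2*MF, ?_⟩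
    rintro y ⟨x, hx, rfl⟩
    have := abs_sub (fn i x) (f x)
    have := hfnb i x hx
    have := hfb x hx
    linarith
  have hδle : ∀ i, ∀ x ∈ X, |fn i x - f x| ≤ δ i := by
    intro i x hx
    rw [hδ]
    exact le_csSup (hδbdd i) ⟨x, hx, rfl⟩
  have hδ0 : ∀ i, 0 ≤ δ i := fun i => (abs_nonneg _).trans (hδle i x0 hx0)
  -- convexity of the fcheck's
  have hfcheckconv : ∀ i, ConvexOn ℝ X (fcheck i) := by
    intro i
    have hfhatconv : ConvexOn ℝ X (fhat i) := by
      have : fhat i = fun x => ⨆ ℓ, (α i ℓ + ⟪β i ℓ, x⟫) := funext (hPL i)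
      rw [this]
      exact aux_iSup_convexOn (hk i) _ hXconv (fun ℓ => aux_affine_convexOn hXconv _ _)
    have hcutconv : ConvexOn ℝ X
        (fun x => ⨆ j : Fin m, (fn i (xhat j) + ⟪υ i j, x - xhat j⟫ - ε₂)) := by
      refine aux_iSup_convexOn hm _ hXconv (fun j => ?_)
      have : (fun x => fn i (xhat j) + ⟪υ i j, x - xhat j⟫ - ε₂)
          = fun x => (fn i (xhat j) - ⟪υ i j, xhat j⟫ - ε₂) + ⟪υ i j, x⟫ := by
        funext x; rw [inner_sub_right]; ring
      rw [this]
      exact aux_affine_convexOn hXconv _ _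
    have : fcheck i = (fhat i) ⊔
        (fun x => ⨆ j : Fin m, (fn i (xhat j) + ⟪υ i j, x - xhat j⟫ - ε₂)) := by
      funext x
      rw [hfcheck, Pi.sup_apply]
    rw [this]
    exact hfhatconv.sup hcutconv
  -- pointwise bounds on fcheck
  have hfcheck_le : ∀ i j, fcheck i (xhat j) ≤ fn i (xhat j) := by
    intro i j
    rw [hfcheck]
    refine max_le (houter i _ (hxhatX j)) (ciSup_le fun j' => ?_)
    exact hυ i j' (xhat j) (hxhatX j)
  have hfcheck_ge : ∀ i, ∀ x ∈ X, fn i (xhat i) - ε₁ ≤ fcheck i x := by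
    intro i x hx
    rw [hfcheck]
    have h1 : fhat i (xhat i) ≤ fhat i x := isMinOn_iff.mp (hxhat i).2 x hx
    have h2 := hterm i
    have h3 := le_max_left (fhat i x)
      (⨆ j : Fin m, (fn i (xhat j) + ⟪υ i j, x - xhat j⟫ - ε₂))
    linarith
  have hcross : ∀ i j, fn i (xhat j) ≤ fn j (xhat j) + (if i = j then 0 else δ i + δ j) := by
    intro i j
    by_cases hij : i = j
    · simp [hij]
    · rw [if_neg hij]
      have h1 := abs_le.mp (hδle i (xhat j) (hxhatX j))
      have h2 := abs_le.mp (hδle j (xhat j) (hxhatX j))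
      linarith [h1.2, h2.1]
  -- abbreviations
  set T := ∑ q ∈ Finset.univ.filter (fun q : Fin m × Fin m => q.1 ≠ q.2), (δ q.1 + δ q.2)
    with hT
  have hT0 : 0 ≤ T := Finset.sum_nonneg fun q _ => add_nonneg (hδ0 _) (hδ0 _)
  set g : EuclideanSpace ℝ (Fin p) → ℝ := fun y => (1 / m : ℝ) * ∑ i, fcheck i y with hgdef
  set B := ∑ j, fn j (xhat j) with hB
  -- double-sum estimate
  have hsum : ∑ i : Fin m, ∑ j : Fin m, fn i (xhat j) ≤ (m:ℝ) * B + T := by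
    have h1 : ∑ i : Fin m, ∑ j : Fin m, fn i (xhat j)
        ≤ ∑ i : Fin m, ∑ j : Fin m, (fn j (xhat j) + (if i = j then 0 else δ i + δ j)) :=
      Finset.sum_le_sum fun i _ => Finset.sum_le_sum fun j _ => hcross i j
    refine h1.trans (le_of_eq ?_)
    have h2 : ∑ i : Fin m, ∑ j : Fin m, (if i = j then (0:ℝ) else δ i + δ j) = T := by
      rw [hT, Finset.sum_filter, Fintype.sum_prod_type]
      refine Finset.sum_congr rfl fun i _ => Finset.sum_congr rfl fun j _ => ?_
      by_cases h : i = j <;> simp [h]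
    calc ∑ i : Fin m, ∑ j : Fin m, (fn j (xhat j) + (if i = j then (0:ℝ) else δ i + δ j))
        = ∑ i : Fin m, (B + ∑ j : Fin m, (if i = j then (0:ℝ) else δ i + δ j)) := by
          refine Finset.sum_congr rfl fun i _ => ?_
          rw [Finset.sum_add_distrib]
      _ = (m:ℝ) * B + T := by
          rw [Finset.sum_add_distrib, Finset.sum_const, Finset.card_univ, Fintype.card_fin,
            nsmul_eq_mul, h2]
  -- the average lies in X
  have hsumw : ∑ _j : Fin m, (1/m:ℝ) = 1 := by
    rw [Finset.sum_const, Finset.card_univ, Fintype.card_fin, nsmul_eq_mul]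
    field_simp
  have hxavg' : xavg = ∑ j, (1/m:ℝ) • xhat j := by
    rw [hxavg, ← Finset.smul_sum]
    congr 1
    rw [one_div]
  have hxavgX : xavg ∈ X := by
    rw [hxavg']
    exact hXconv.sum_mem (fun j _ => by positivity) hsumw (fun j _ => hxhatX j)
  -- Jensen: g xavg is small
  have hgavg : g xavg ≤ (1/m:ℝ) * B + (1/m^2:ℝ) * T := by
    have havg : ∀ i, fcheck i xavg ≤ (1/m:ℝ) * ∑ j, fcheck i (xhat j) := by
      intro i
      have h := (hfcheckconv i).map_sum_le (t := Finset.univ) (w := fun _ => (1/m:ℝ))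
        (p := xhat) (fun _ _ => by positivity) hsumw (fun j _ => hxhatX j)
      rw [← hxavg'] at h
      refine h.trans (le_of_eq ?_)
      rw [Finset.mul_sum]
      exact Finset.sum_congr rfl fun j _ => by rw [smul_eq_mul]
    have h1 : ∑ i, fcheck i xavg ≤ (1/m:ℝ) * ∑ i : Fin m, ∑ j : Fin m, fcheck i (xhat j) := by
      rw [Finset.mul_sum]
      exact Finset.sum_le_sum fun i _ => havg i
    have h2 : ∑ i : Fin m, ∑ j : Fin m, fcheck i (xhat j)
        ≤ ∑ i : Fin m, ∑ j : Fin m, fn i (xhat j) :=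
      Finset.sum_le_sum fun i _ => Finset.sum_le_sum fun j _ => hfcheck_le i j
    have h3 : g xavg ≤ (1/m:ℝ) * ((1/m:ℝ) * ((m:ℝ) * B + T)) := by
      rw [hgdef]
      have := h2.trans hsum
      have h4 : ∑ i, fcheck i xavg ≤ (1/m:ℝ) * ((m:ℝ) * B + T) := by
        refine h1.trans ?_
        gcongr
      calc (1/m:ℝ) * ∑ i, fcheck i xavg ≤ (1/m:ℝ) * ((1/m:ℝ) * ((m:ℝ) * B + T)) := by
            gcongr
      _ = _ := rfl
    refine h3.trans (le_of_eq ?_)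
    field_simp
  -- lower bound on g over X
  have hglb : ∀ x ∈ X, (1/m:ℝ) * B - ε₁ ≤ g x := by
    intro x hx
    have h1 : ∑ i, (fn i (xhat i) - ε₁) ≤ ∑ i, fcheck i x :=
      Finset.sum_le_sum fun i _ => hfcheck_ge i x hx
    rw [Finset.sum_sub_distrib, Finset.sum_const, Finset.card_univ, Fintype.card_fin,
      nsmul_eq_mul] at h1
    have h2 := mul_le_mul_of_nonneg_left h1 (by positivity : (0:ℝ) ≤ (1/m:ℝ))
    rw [hgdef]
    have h3 : (1/m:ℝ) * (B - (m:ℝ) * ε₁) = (1/m:ℝ) * B - ε₁ := by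
      field_simp
    rw [← h3]
    exact h2
  have hgXne : (g '' X).Nonempty := ⟨g x0, x0, hx0, rfl⟩
  have hgstar_ge : (1/m:ℝ) * B - ε₁ ≤ sInf (g '' X) := by
    refine le_csInf hgXne ?_
    rintro y ⟨x, hx, rfl⟩
    exact hglb x hx
  set Δ := τ₂ + (1 / m ^ 2 : ℝ) * T with hΔ
  have hτ20 : 0 ≤ τ₂ := by rw [hτ₂]; linarith
  have hΔ0 : 0 ≤ Δ := by
    have : 0 ≤ (1 / m ^ 2 : ℝ) * T := by positivity
    rw [hΔ]; linarith
  have hkey : g xavg ≤ sInf (g '' X) + ε + Δ := by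
    have hm1 : (1:ℝ) ≤ (m:ℝ) := by exact_mod_cast hm
    have hε₂' : 0 ≤ ((m - 1 : ℝ) / m) * ε₂ :=
      mul_nonneg (div_nonneg (by linarith) hm0.le) hε₂
    have hτ : ε₁ ≤ ε + τ₂ := by rw [hτ₂]; linarith
    rw [hΔ]
    linarith
  -- bounds related to DX
  have hDXbdd : BddAbove (Set.image2 (fun x x' => ‖x - x'‖) X X) := by
    obtain ⟨C, hC⟩ := Metric.isBounded_iff.mp hXcomp.isBounded
    refine ⟨C, ?_⟩
    rintro y ⟨x, hx, x', hx', rfl⟩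
    simpa [dist_eq_norm] using hC hx hx'
  have hDXle : ∀ x ∈ X, ∀ y ∈ X, ‖x - y‖ ≤ DX := by
    intro x hx y hy
    rw [hDX]
    exact le_csSup hDXbdd ⟨x, hx, y, hy, rfl⟩
  have hDX0 : 0 ≤ DX := by
    have := hDXle x0 hx0 x0 hx0
    simpa using (norm_nonneg (x0 - x0)).trans this
  have hBddBelow : BddBelow ((fun x => ‖xavg - x‖) '' XhatN) := by
    refine ⟨0, ?_⟩
    rintro y ⟨x, hx, rfl⟩
    exact norm_nonneg _
  -- main case analysis
  rcases eq_or_lt_of_le hΔ0 with hΔeq | hΔpos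
  · -- Δ = 0: xavg itself is in XhatN
    have hmem : xavg ∈ XhatN := by
      rw [hXhatN]
      refine ⟨hxavgX, ?_⟩
      have : g xavg ≤ sInf (g '' X) + ε := by rw [← hΔeq] at hkey; linarith
      exact this
    have h1 : sInf ((fun x => ‖xavg - x‖) '' XhatN) ≤ ‖xavg - xavg‖ :=
      csInf_le hBddBelow ⟨xavg, hmem, rfl⟩
    have h2 : Δ / ε * DX = 0 := by rw [← hΔeq]; simp
    calc sInf ((fun x => ‖xavg - x‖) '' XhatN) ≤ ‖xavg - xavg‖ := h1
      _ = 0 := by simp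
      _ = Δ / ε * DX := h2.symm
  · -- Δ > 0
    set η := min Δ ε / 2 with hη
    have hminpos : 0 < min Δ ε := lt_min hΔpos hε
    have hη0 : 0 < η := half_pos hminpos
    have hηΔ : η ≤ Δ := (half_le_self hminpos.le).trans (min_le_left _ _)
    have hηε : η < ε :=
      lt_of_le_of_lt (by rw [hη]; gcongr; exact min_le_right _ _) (half_lt_self hε)
    obtain ⟨y, hy, hylt⟩ := Real.lt_sInf_add_pos hgXne hη0
    obtain ⟨xstar, hxstarX, rfl⟩ := hy
    set D := ε + Δ - η with hD
    have hDpos : 0 < D := by rw [hD]; linarith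
    set t := Δ / D with ht
    have ht0 : 0 ≤ t := div_nonneg hΔpos.le hDpos.le
    have ht1 : t ≤ 1 := by rw [ht, div_le_one hDpos, hD]; linarith
    set z := (1 - t) • xavg + t • xstar with hz
    have hzX : z ∈ X := hXconv hxavgX hxstarX (by linarith) ht0 (by ring)
    -- convexity of g along the segment
    have hcz : g z ≤ (1 - t) * g xavg + t * g xstar := by
      have h := fun i => (hfcheckconv i).2 hxavgX hxstarX
        (by linarith : (0:ℝ) ≤ 1 - t) ht0 (by ring)
      have hs : ∑ i, fcheck i z ≤ (1 - t) * ∑ i, fcheck i xavg + t * ∑ i, fcheck i xstar := by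
        rw [Finset.mul_sum, Finset.mul_sum, ← Finset.sum_add_distrib]
        refine Finset.sum_le_sum fun i _ => ?_
        have hi := h i
        simp only [smul_eq_mul] at hi
        rw [hz]
        exact hi
      have h2 := mul_le_mul_of_nonneg_left hs (by positivity : (0:ℝ) ≤ (1/m:ℝ))
      rw [hgdef]
      calc (1/m:ℝ) * ∑ i, fcheck i z
          ≤ (1/m:ℝ) * ((1 - t) * ∑ i, fcheck i xavg + t * ∑ i, fcheck i xstar) := h2
        _ = (1 - t) * ((1/m:ℝ) * ∑ i, fcheck i xavg) + t * ((1/m:ℝ) * ∑ i, fcheck i xstar) := by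
            ring
    have hgz : g z ≤ sInf (g '' X) + ε := by
      have hb : (1 - t) * g xavg + t * g xstar
          ≤ (1 - t) * (sInf (g '' X) + ε + Δ) + t * (sInf (g '' X) + η) := by
        have h1 : (1 - t) * g xavg ≤ (1 - t) * (sInf (g '' X) + ε + Δ) :=
          mul_le_mul_of_nonneg_left hkey (by linarith)
        have h2 : t * g xstar ≤ t * (sInf (g '' X) + η) :=
          mul_le_mul_of_nonneg_left hylt.le ht0
        linarith
      have hid : (1 - t) * (sInf (g '' X) + ε + Δ) + t * (sInf (g '' X) + η)
          = sInf (g '' X) + ε := by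
        rw [ht, hD]
        have hD' : ε + Δ - η ≠ 0 := by linarith
        field_simp
        ring
      linarith
    have hmem : z ∈ XhatN := by
      rw [hXhatN]
      exact ⟨hzX, hgz⟩
    have hnorm : ‖xavg - z‖ = t * ‖xavg - xstar‖ := by
      have hzz : xavg - z = t • (xavg - xstar) := by
        rw [hz]
        module
      rw [hzz, norm_smul, Real.norm_eq_abs, abs_of_nonneg ht0]
    have htle : t ≤ Δ / ε := by
      rw [ht]
      exact div_le_div_of_nonneg_left hΔpos.le hε (by rw [hD]; linarith)
    have hfin : ‖xavg - z‖ ≤ Δ / ε * DX := by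
      rw [hnorm]
      exact mul_le_mul htle (hDXle xavg hxavgX xstar hxstarX) (norm_nonneg _)
        (div_nonneg hΔpos.le hε.le)
    calc sInf ((fun x => ‖xavg - x‖) '' XhatN) ≤ ‖xavg - z‖ :=
        csInf_le hBddBelow ⟨z, hmem, rfl⟩
      _ ≤ Δ / ε * DX := hfin
end
end

section
/- Let X ⊆ ℝ^p be a nonempty compact convex set with D_X = max_{x,x'∈X} ‖x − x'‖, and x* ∈ X. Let x̂¹_n,…,x̂^m_n ∈ X and let f̌¹_n,…,f̌^m_n : X → ℝ be convex functions that are Lipschitz continuous with constant L_f and satisfy f̌^i_n(x) ≥ f̌^i_n(x̂^i_n) − ε' for all x ∈ X and all i (lower-bound augmentation with tolerance ε' > 0). Suppose ‖x̂^i_n − x*‖ ≤ t for all i ∈ {1,…,m} and that 0 < ε ≤ 2 L_f t + ε'. Let X̌_{N,ε} be the ε-optimal solution set of min_{x∈X} (1/m) Σ_{i=1}^m f̌^i_n(x). Then inf_{x ∈ X̌_{N,ε}} ‖(1/m) Σ_{i=1}^m x̂^i_n − x‖ ≤ ((2 L_f t + ε' − ε)/ε)·D_X. -/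
noncomputable section

/-- Lemma 5.2: if the SD incumbents `x̂ⁱₙ` are all within distance `t` of the
unique optimal solution `x*`, the augmented approximations `f̌ⁱₙ` are convex,
`L_f`-Lipschitz on `X`, and lower-bound augmented with tolerance `ε'`, and
`0 < ε ≤ 2 L_f t + ε'`, then the distance from the average incumbent to the
ε-optimal set of the aggregated problem is at most `((2 L_f t + ε' − ε)/ε) D_X`. -/
theorem sd_average_incumbent_distance_to_aggregated_eps_optimal_set
    {p m : ℕ} (hm : 1 ≤ m)
    (X : Set (EuclideanSpace ℝ (Fin p)))
    (hXne : X.Nonempty) (hXcomp : IsCompact X) (hXconv : Convex ℝ X)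
    (DX : ℝ) (hDX : DX = sSup (Set.image2 (fun x x' => ‖x - x'‖) X X))
    (xstar : EuclideanSpace ℝ (Fin p)) (hxstar : xstar ∈ X)
    (xhat : Fin m → EuclideanSpace ℝ (Fin p)) (hxhat : ∀ i, xhat i ∈ X)
    (fcheck : Fin m → EuclideanSpace ℝ (Fin p) → ℝ)
    (hfcheck_conv : ∀ i, ConvexOn ℝ X (fcheck i))
    (Lf : ℝ) (hLf : 0 ≤ Lf)
    (hLip : ∀ i, ∀ x ∈ X, ∀ y ∈ X, |fcheck i x - fcheck i y| ≤ Lf * ‖x - y‖)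
    (ε' : ℝ) (hε' : 0 < ε')
    (hlower : ∀ i, ∀ x ∈ X, fcheck i (xhat i) - ε' ≤ fcheck i x)
    (t : ℝ) (ht : ∀ i, ‖xhat i - xstar‖ ≤ t)
    (ε : ℝ) (hε : 0 < ε) (hεle : ε ≤ 2 * Lf * t + ε')
    (xavg : EuclideanSpace ℝ (Fin p)) (hxavg : xavg = (m : ℝ)⁻¹ • ∑ i, xhat i)
    -- the ε-optimal set of the aggregated problem
    (XcheckN : Set (EuclideanSpace ℝ (Fin p)))
    (hXcheckN : XcheckN = {x ∈ X | (1 / m : ℝ) * ∑ i, fcheck i x ≤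
      sInf ((fun y => (1 / m : ℝ) * ∑ i, fcheck i y) '' X) + ε}) :
    sInf ((fun x => ‖xavg - x‖) '' XcheckN) ≤
      ((2 * Lf * t + ε' - ε) / ε) * DX := by
  have hm0 : (0 : ℝ) < m := by exact_mod_cast hm
  set F : EuclideanSpace ℝ (Fin p) → ℝ := fun x => (1 / m : ℝ) * ∑ i, fcheck i x with hF
  set δ : ℝ := 2 * Lf * t + ε' with hδ
  have hδpos : 0 < δ := lt_of_lt_of_le hε hεle
  have ht0 : 0 ≤ t := le_trans (norm_nonneg _) (ht ⟨0, hm⟩)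
  -- xavg ∈ X
  have hxavg' : xavg = ∑ i, (m : ℝ)⁻¹ • xhat i := by
    rw [hxavg, Finset.smul_sum]
  have hxavgX : xavg ∈ X := by
    rw [hxavg']
    refine hXconv.sum_mem (fun i _ => by positivity) ?_ (fun i _ => hxhat i)
    simp [Finset.sum_const, Finset.card_univ]
    field_simp
  -- ‖xavg - xstar‖ ≤ t
  have havgstar : ‖xavg - xstar‖ ≤ t := by
    have heq : xavg - xstar = ∑ i, (m : ℝ)⁻¹ • (xhat i - xstar) := by
      rw [hxavg']
      have : xstar = ∑ i : Fin m, (m : ℝ)⁻¹ • xstar := by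
        rw [Finset.sum_const, Finset.card_univ, Fintype.card_fin]
        rw [← Nat.cast_smul_eq_nsmul ℝ, smul_smul]
        field_simp
        exact (one_smul ℝ xstar).symm
      calc (∑ i, (m : ℝ)⁻¹ • xhat i) - xstar
          = (∑ i, (m : ℝ)⁻¹ • xhat i) - ∑ i : Fin m, (m : ℝ)⁻¹ • xstar := by rw [← this]
        _ = ∑ i, ((m : ℝ)⁻¹ • xhat i - (m : ℝ)⁻¹ • xstar) := by rw [Finset.sum_sub_distrib]
        _ = ∑ i, (m : ℝ)⁻¹ • (xhat i - xstar) := by simp [smul_sub]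
    calc ‖xavg - xstar‖ ≤ ∑ i, ‖(m : ℝ)⁻¹ • (xhat i - xstar)‖ := by
          rw [heq]; exact norm_sum_le _ _
      _ ≤ ∑ _i : Fin m, (m : ℝ)⁻¹ * t := by
          refine Finset.sum_le_sum fun i _ => ?_
          rw [norm_smul, Real.norm_eq_abs, abs_of_nonneg (by positivity)]
          exact mul_le_mul_of_nonneg_left (ht i) (by positivity)
      _ = t := by
          rw [Finset.sum_const, Finset.card_univ, Fintype.card_fin, nsmul_eq_mul]
          field_simp
  have hdist : ∀ i, ‖xavg - xhat i‖ ≤ 2 * t := fun i => by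
    calc ‖xavg - xhat i‖ = ‖(xavg - xstar) + (xstar - xhat i)‖ := by rw [sub_add_sub_cancel]
      _ ≤ ‖xavg - xstar‖ + ‖xstar - xhat i‖ := norm_add_le _ _
      _ ≤ t + t := by
          refine add_le_add havgstar ?_
          rw [← norm_neg]; simpa using ht i
      _ = 2 * t := by ring
  -- key lower bound: F y ≥ F xavg - δ for y ∈ X
  have hkey : ∀ y ∈ X, F xavg - δ ≤ F y := by
    intro y hy
    have hpt : ∀ i : Fin m, fcheck i xavg - δ ≤ fcheck i y := by
      intro i
      have h1 : fcheck i xavg - fcheck i (xhat i) ≤ Lf * (2 * t) := by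
        have := le_trans (le_abs_self _) (hLip i xavg hxavgX (xhat i) (hxhat i))
        exact le_trans this (mul_le_mul_of_nonneg_left (hdist i) hLf)
      have h2 := hlower i y hy
      nlinarith
    have hsum : (∑ i, fcheck i xavg) - m * δ ≤ ∑ i, fcheck i y := by
      have := Finset.sum_le_sum (fun i (_ : i ∈ Finset.univ) => hpt i)
      simpa [Finset.sum_sub_distrib, Finset.sum_const, Finset.card_univ] using this
    have := mul_le_mul_of_nonneg_left hsum (by positivity : (0:ℝ) ≤ (1/m : ℝ))
    simp only [hF]
    rw [mul_sub] at this
    have hmδ : (1 / m : ℝ) * (m * δ) = δ := by field_simp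
    linarith [this, hmδ ▸ this]
  -- continuity
  have hcont : ContinuousOn F X := by
    refine ContinuousOn.mul continuousOn_const ?_
    refine continuousOn_finset_sum _ fun i _ => ?_
    have : LipschitzOnWith (Real.toNNReal Lf) (fcheck i) X := by
      refine LipschitzOnWith.of_dist_le_mul fun x hx y hy => ?_
      rw [Real.dist_eq, dist_eq_norm]
      simpa [Real.coe_toNNReal _ hLf] using hLip i x hx y hy
    exact this.continuousOn
  obtain ⟨xbar, hxbarX, hminOn⟩ := hXcomp.exists_isMinOn hXne hcont
  have hmin : ∀ y ∈ X, F xbar ≤ F y := fun y hy => hminOn hy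
  have hsInfF : sInf (F '' X) = F xbar := by
    apply le_antisymm
    · exact csInf_le ⟨F xbar, by rintro _ ⟨y, hy, rfl⟩; exact hmin y hy⟩ ⟨xbar, hxbarX, rfl⟩
    · exact le_csInf (hXne.image F) (by rintro _ ⟨y, hy, rfl⟩; exact hmin y hy)
  -- construct z
  set lam : ℝ := (δ - ε) / δ with hlam
  have hδε : 0 ≤ δ - ε := by linarith
  have hlam0 : 0 ≤ lam := div_nonneg hδε hδpos.le
  have hlam1' : 1 - lam = ε / δ := by
    rw [hlam]; field_simp
    ring
  have hlam1 : 0 ≤ 1 - lam := by rw [hlam1']; positivity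
  set z : EuclideanSpace ℝ (Fin p) := lam • xbar + (1 - lam) • xavg with hz
  have hzX : z ∈ X := hXconv hxbarX hxavgX hlam0 hlam1 (by ring)
  have hFz : F z ≤ lam * F xbar + (1 - lam) * F xavg := by
    have hpt : ∀ i : Fin m, fcheck i z ≤ lam * fcheck i xbar + (1 - lam) * fcheck i xavg :=
      fun i => (hfcheck_conv i).2 hxbarX hxavgX hlam0 hlam1 (by ring)
    have hsum := Finset.sum_le_sum (fun i (_ : i ∈ Finset.univ) => hpt i)
    have := mul_le_mul_of_nonneg_left hsum (by positivity : (0:ℝ) ≤ (1/m : ℝ))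
    simp only [hF]
    rw [Finset.sum_add_distrib, ← Finset.mul_sum, ← Finset.mul_sum] at this
    linarith [this]
  have hFavg : F xavg ≤ F xbar + δ := by linarith [hkey xbar hxbarX]
  have hFzε : F z ≤ sInf (F '' X) + ε := by
    rw [hsInfF]
    have : lam * F xbar + (1 - lam) * F xavg ≤ F xbar + (1 - lam) * δ := by nlinarith
    have h2 : (1 - lam) * δ = ε := by rw [hlam1']; field_simp
    linarith
  have hzmem : z ∈ XcheckN := by
    rw [hXcheckN]
    exact ⟨hzX, hFzε⟩
  -- DX bounds
  have hbdd : BddAbove (Set.image2 (fun x x' => ‖x - x'‖) X X) := by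
    have hc : IsCompact (Set.image2 (fun (x x' : EuclideanSpace ℝ (Fin p)) => ‖x - x'‖) X X) := by
      rw [← Set.image_prod]
      exact (hXcomp.prod hXcomp).image (by fun_prop)
    exact hc.bddAbove
  have hDXb : ‖xavg - xbar‖ ≤ DX := by
    rw [hDX]
    exact le_csSup hbdd (Set.mem_image2_of_mem hxavgX hxbarX)
  have hDX0 : 0 ≤ DX := le_trans (norm_nonneg _) hDXb
  have hnormz : ‖xavg - z‖ = lam * ‖xavg - xbar‖ := by
    have : xavg - z = lam • (xavg - xbar) := by
      rw [hz]; module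
    rw [this, norm_smul, Real.norm_eq_abs, abs_of_nonneg hlam0]
  have hfinal : ‖xavg - z‖ ≤ ((2 * Lf * t + ε' - ε) / ε) * DX := by
    rw [hnormz]
    have h1 : lam * ‖xavg - xbar‖ ≤ lam * DX :=
      mul_le_mul_of_nonneg_left hDXb hlam0
    have h2 : lam * DX ≤ ((δ - ε) / ε) * DX := by
      have : lam ≤ (δ - ε) / ε := by
        rw [hlam]; gcongr
      exact mul_le_mul_of_nonneg_right this hDX0
    calc lam * ‖xavg - xbar‖ ≤ lam * DX := h1
      _ ≤ ((δ - ε) / ε) * DX := h2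
      _ = ((2 * Lf * t + ε' - ε) / ε) * DX := rfl
  refine le_trans (csInf_le ?_ ⟨z, hzmem, rfl⟩) hfinal
  exact ⟨0, by rintro _ ⟨y, _, rfl⟩; exact norm_nonneg _⟩


end
end
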